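/- arXiv:2601.08769 — 6 statements merged into one kernel-verified Lean document; each statement's English description precedes it below -/
import Mathlib

section
/- Let G be an n-vertex α-expander with 0 < α < 1/100, and let U ⊆ V(G) with |U| ≤ α²n/100. Then there exists a set B ⊆ V(G)\U with |B| ≤ 2|U|/α such that |N_{G\U}(B)| ≤ |B| and the graph G \ (U ∪ B) is an (α/2)-expander. -/
open Finset

/-- The external neighborhood of `S` inside the induced subgraph of `G` on the
vertex set `W`: vertices of `W` outside `S` adjacent (in `G`) to some vertex of `S`. -/
def extNbhdIn {V : Type*} (G : SimpleGraph V) [Fintype V] [DecidableEq V]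
    [DecidableRel G.Adj] (W S : Finset V) : Finset V :=
  Finset.univ.filter fun v => v ∈ W ∧ v ∉ S ∧ ∃ u ∈ S, G.Adj u v

lemma mem_extNbhdIn {V : Type*} {G : SimpleGraph V} [Fintype V] [DecidableEq V]
    [DecidableRel G.Adj] {W S : Finset V} {v : V} :
    v ∈ extNbhdIn G W S ↔ v ∈ W ∧ v ∉ S ∧ ∃ u ∈ S, G.Adj u v := by
  simp [extNbhdIn]

/-- Cleaning lemma: from an `α`-expander `G` (with `0 < α < 1/100`), after deleting
a small set `U` (of size at most `α²n/100`) one can delete a further set `B` of size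
at most `2|U|/α`, with `|N_{G∖U}(B)| ≤ |B|`, so that `G ∖ (U ∪ B)` is an
`α/2`-expander. -/
theorem stmt1 {V : Type*} (G : SimpleGraph V) [Fintype V] [DecidableEq V]
    [DecidableRel G.Adj] (α : ℝ) (hα0 : 0 < α) (hα1 : α < 1 / 100)
    (hExp : ∀ S : Finset V, (S.card : ℝ) ≤ (Fintype.card V : ℝ) / 2 →
      α * S.card ≤ ((extNbhdIn G Finset.univ S).card : ℝ))
    (U : Finset V) (hU : (U.card : ℝ) ≤ α ^ 2 * (Fintype.card V : ℝ) / 100) :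
    ∃ B : Finset V, B ⊆ Finset.univ \ U ∧ (B.card : ℝ) ≤ 2 * U.card / α ∧
      (extNbhdIn G (Finset.univ \ U) B).card ≤ B.card ∧
      (∀ S : Finset V, S ⊆ Finset.univ \ (U ∪ B) →
        (S.card : ℝ) ≤ ((Finset.univ \ (U ∪ B)).card : ℝ) / 2 →
        (α / 2) * S.card ≤ ((extNbhdIn G (Finset.univ \ (U ∪ B)) S).card : ℝ)) := by
  classical
  set n := Fintype.card V with hn
  set P : Finset V → Prop := fun B => B ⊆ Finset.univ \ U ∧
      ((extNbhdIn G (Finset.univ \ U) B).card : ℝ) ≤ (α/2) * B.card ∧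
      (B.card : ℝ) ≤ 2 * U.card / α with hP
  have hPempty : P ∅ := by
    refine ⟨by simp, ?_, ?_⟩
    · simp [extNbhdIn]
    · simp only [card_empty, Nat.cast_zero]
      positivity
  have hne : (Finset.univ.powerset.filter P).Nonempty :=
    ⟨∅, by rw [mem_filter]; exact ⟨mem_powerset.mpr (empty_subset _), hPempty⟩⟩
  obtain ⟨B, hBmem, hBmax⟩ := Finset.exists_max_image _ Finset.card hne
  rw [mem_filter] at hBmem
  obtain ⟨-, hBsub, hBN, hBcard⟩ := hBmem
  have hmax : ∀ B' : Finset V, P B' → B'.card ≤ B.card := fun B' h =>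
    hBmax B' (by rw [mem_filter]; exact ⟨mem_powerset.mpr (subset_univ _), h⟩)
  refine ⟨B, hBsub, hBcard, ?_, ?_⟩
  · -- |N(B)| ≤ |B|
    have : ((extNbhdIn G (Finset.univ \ U) B).card : ℝ) ≤ (B.card : ℝ) := by
      have hb : (0:ℝ) ≤ (B.card : ℝ) := Nat.cast_nonneg _
      nlinarith
    exact_mod_cast this
  intro S hSsub hShalf
  by_contra hSbad
  push_neg at hSbad
  -- S is nonempty
  have hSne : S.card ≠ 0 := by
    intro h
    have h0 : (0:ℝ) ≤ ((extNbhdIn G (Finset.univ \ (U ∪ B)) S).card : ℝ) :=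
      Nat.cast_nonneg _
    rw [h] at hSbad
    push_cast at hSbad
    linarith
  -- disjointness facts
  have hUB : Disjoint U B := by
    rw [Finset.disjoint_right]
    intro a ha
    have := hBsub ha
    simp only [mem_sdiff] at this
    exact this.2
  have hSB : Disjoint B S := by
    rw [Finset.disjoint_right]
    intro a ha
    have := hSsub ha
    simp only [mem_sdiff, mem_union] at this
    exact fun hb => this.2 (Or.inr hb)
  have hB'card : (B ∪ S).card = B.card + S.card := card_union_of_disjoint hSB
  have hB'cardR : ((B ∪ S).card : ℝ) = (B.card : ℝ) + (S.card : ℝ) := by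
    exact_mod_cast congrArg (Nat.cast : ℕ → ℝ) hB'card
  -- L1 : neighborhoods add up
  have hL1 : extNbhdIn G (Finset.univ \ U) (B ∪ S) ⊆
      extNbhdIn G (Finset.univ \ U) B ∪ extNbhdIn G (Finset.univ \ (U ∪ B)) S := by
    intro v hv
    rw [mem_extNbhdIn] at hv
    obtain ⟨hvW, hvBS, u, hu, hadj⟩ := hv
    have hvU : v ∉ U := (mem_sdiff.mp hvW).2
    have hvB : v ∉ B := fun h => hvBS (mem_union.mpr (Or.inl h))
    have hvS : v ∉ S := fun h => hvBS (mem_union.mpr (Or.inr h))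
    rcases mem_union.mp hu with h | h
    · exact mem_union.mpr (Or.inl (mem_extNbhdIn.mpr ⟨hvW, hvB, u, h, hadj⟩))
    · refine mem_union.mpr (Or.inr (mem_extNbhdIn.mpr ⟨?_, hvS, u, h, hadj⟩))
      simp [mem_sdiff, mem_union, hvU, hvB]
  have hNle : ((extNbhdIn G (Finset.univ \ U) (B ∪ S)).card : ℝ) ≤
      (α/2) * B.card + (α/2) * S.card := by
    have h1 := card_le_card hL1
    have h2 := card_union_le (extNbhdIn G (Finset.univ \ U) B)
      (extNbhdIn G (Finset.univ \ (U ∪ B)) S)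
    have h3 : ((extNbhdIn G (Finset.univ \ U) (B ∪ S)).card : ℝ) ≤
        ((extNbhdIn G (Finset.univ \ U) B).card : ℝ) +
        ((extNbhdIn G (Finset.univ \ (U ∪ B)) S).card : ℝ) := by
      exact_mod_cast le_trans h1 h2
    have := hSbad.le
    linarith
  have hB'sub : B ∪ S ⊆ Finset.univ \ U := by
    intro v hv
    rcases mem_union.mp hv with h | h
    · exact hBsub h
    · have := hSsub h
      simp only [mem_sdiff, mem_union] at this ⊢
      exact ⟨mem_univ v, fun hvU => this.2 (Or.inl hvU)⟩
  -- size of the remaining vertex set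
  have hUBn : U.card + B.card ≤ n := by
    have := card_le_card (Finset.subset_univ (U ∪ B))
    rwa [card_union_of_disjoint hUB, card_univ] at this
  have hcompl : (((Finset.univ \ (U ∪ B)).card : ℕ) : ℝ) =
      (n : ℝ) - (U.card : ℝ) - (B.card : ℝ) := by
    rw [card_sdiff_of_subset (Finset.subset_univ _), card_univ, card_union_of_disjoint hUB,
      Nat.cast_sub hUBn]
    push_cast
    ring
  have hShalf' : (S.card : ℝ) ≤ ((n:ℝ) - U.card - B.card) / 2 := by
    rw [hcompl] at hShalf; exact hShalf
  by_cases hcase : ((B ∪ S).card : ℝ) ≤ (n : ℝ) / 2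
  · -- Case A : apply expansion to B ∪ S directly
    have hexp := hExp (B ∪ S) hcase
    have hL2 : extNbhdIn G Finset.univ (B ∪ S) ⊆
        U ∪ extNbhdIn G (Finset.univ \ U) (B ∪ S) := by
      intro v hv
      rw [mem_extNbhdIn] at hv
      obtain ⟨-, hvBS, u, hu, hadj⟩ := hv
      by_cases hvU : v ∈ U
      · exact mem_union.mpr (Or.inl hvU)
      · exact mem_union.mpr (Or.inr (mem_extNbhdIn.mpr
          ⟨mem_sdiff.mpr ⟨mem_univ _, hvU⟩, hvBS, u, hu, hadj⟩))
    have hL2c : ((extNbhdIn G Finset.univ (B ∪ S)).card : ℝ) ≤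
        (U.card : ℝ) + ((extNbhdIn G (Finset.univ \ U) (B ∪ S)).card : ℝ) := by
      have h1 := card_le_card hL2
      have h2 := card_union_le U (extNbhdIn G (Finset.univ \ U) (B ∪ S))
      exact_mod_cast le_trans h1 h2
    have hαc : α * (((B ∪ S).card : ℕ) : ℝ) = α * B.card + α * S.card := by
      rw [hB'cardR]; ring
    have hsz : ((B ∪ S).card : ℝ) ≤ 2 * U.card / α := by
      rw [le_div_iff₀ hα0]
      linarith
    have hPB' : P (B ∪ S) := ⟨hB'sub, by rw [hB'cardR]; linarith, hsz⟩
    have := hmax _ hPB'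
    omega
  · -- Case B : B ∪ S is large; apply expansion to a subset of size ⌊n/2⌋
    push_neg at hcase
    -- |U| < |B|
    have hub : (U.card : ℝ) < (B.card : ℝ) := by linarith
    -- U is nonempty, so 1 ≤ |U|
    have hU1 : (1:ℝ) ≤ (U.card : ℝ) := by
      by_contra hc
      push_neg at hc
      have h0 : U.card = 0 := by
        have : U.card < 1 := by exact_mod_cast hc
        omega
      rw [h0] at hBcard hub
      simp only [Nat.cast_zero] at hBcard hub
      rw [mul_zero, zero_div] at hBcard
      linarith
    have hαn : (100:ℝ) ≤ α^2 * n := by linarith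
    have hαn2 : (10000:ℝ) ≤ α * n := by
      have hn0 : (0:ℝ) ≤ (n:ℝ) := Nat.cast_nonneg _
      nlinarith [mul_nonneg hα0.le hn0]
    -- pick T ⊆ B ∪ S of size n/2 (nat division)
    have hn2le : n / 2 ≤ (B ∪ S).card := by
      have h1 : ((n / 2 : ℕ) : ℝ) ≤ (n : ℝ) / 2 := Nat.cast_div_le
      have h2 : ((n / 2 : ℕ) : ℝ) < ((B ∪ S).card : ℝ) := lt_of_le_of_lt h1 hcase
      exact_mod_cast h2.le
    obtain ⟨T, hTsub, hTcard⟩ := Finset.exists_subset_card_eq (s := B ∪ S) (n := n / 2) hn2le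
    have hTcardR : ((T.card : ℕ) : ℝ) = ((n/2 : ℕ) : ℝ) := by exact_mod_cast hTcard
    have hn2half : ((n/2 : ℕ) : ℝ) ≤ (n:ℝ)/2 := Nat.cast_div_le
    have hexp := hExp T (by rw [hTcardR]; exact hn2half)
    rw [hTcardR] at hexp
    -- L3 : N(T) ⊆ U ∪ N_{G∖U}(B∪S) ∪ ((B∪S) ∖ T)
    have hL3 : extNbhdIn G Finset.univ T ⊆
        U ∪ extNbhdIn G (Finset.univ \ U) (B ∪ S) ∪ ((B ∪ S) \ T) := by
      intro v hv
      rw [mem_extNbhdIn] at hv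
      obtain ⟨-, hvT, u, hu, hadj⟩ := hv
      by_cases hvU : v ∈ U
      · exact mem_union.mpr (Or.inl (mem_union.mpr (Or.inl hvU)))
      by_cases hvB' : v ∈ B ∪ S
      · exact mem_union.mpr (Or.inr (mem_sdiff.mpr ⟨hvB', hvT⟩))
      · exact mem_union.mpr (Or.inl (mem_union.mpr (Or.inr (mem_extNbhdIn.mpr
          ⟨mem_sdiff.mpr ⟨mem_univ _, hvU⟩, hvB', u, hTsub hu, hadj⟩))))
    have hL3c : ((extNbhdIn G Finset.univ T).card : ℝ) ≤
        (U.card : ℝ) + ((extNbhdIn G (Finset.univ \ U) (B ∪ S)).card : ℝ) +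
        (((B ∪ S) \ T).card : ℝ) := by
      have h1 := card_le_card hL3
      have h2 := (card_union_le (U ∪ extNbhdIn G (Finset.univ \ U) (B ∪ S))
        ((B ∪ S) \ T)).trans
        (Nat.add_le_add_right (card_union_le U (extNbhdIn G (Finset.univ \ U) (B ∪ S))) _)
      exact_mod_cast le_trans h1 h2
    have hsd : (((B ∪ S) \ T).card : ℝ) = ((B ∪ S).card : ℝ) - ((n/2 : ℕ) : ℝ) := by
      rw [card_sdiff_of_subset hTsub, hTcard]
      exact Nat.cast_sub hn2le
    have hflo : ((n:ℝ) - 1) / 2 ≤ ((n/2 : ℕ) : ℝ) := by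
      have h1 : n ≤ 2 * (n / 2) + 1 := by omega
      have h2 : (n : ℝ) ≤ 2 * ((n/2 : ℕ) : ℝ) + 1 := by exact_mod_cast h1
      linarith
    -- αb ≤ 2u
    have hab : (B.card : ℝ) * α ≤ 2 * U.card := (le_div_iff₀ hα0).mp hBcard
    -- helper nonnegativity / product facts
    have hs0 : (0:ℝ) ≤ (S.card : ℝ) := Nat.cast_nonneg _
    have hb0 : (0:ℝ) ≤ (B.card : ℝ) := Nat.cast_nonneg _
    have hαt : α * (((n:ℝ) - 1) / 2) ≤ α * ((n/2 : ℕ) : ℝ) :=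
      mul_le_mul_of_nonneg_left hflo hα0.le
    have hαs : α * (S.card : ℝ) ≤ α * (((n:ℝ) - U.card - B.card) / 2) :=
      mul_le_mul_of_nonneg_left hShalf' hα0.le
    have hαu : (0:ℝ) ≤ α * U.card := mul_nonneg hα0.le (Nat.cast_nonneg _)
    have hαb : (0:ℝ) ≤ α * B.card := mul_nonneg hα0.le hb0
    have hαα : (0:ℝ) ≤ (1/100 - α) * (α * (n:ℝ)) :=
      mul_nonneg (by linarith) (mul_nonneg hα0.le (Nat.cast_nonneg _))
    have hnn : (0:ℝ) ≤ (1 - α) * (n:ℝ) :=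
      mul_nonneg (by linarith) (Nat.cast_nonneg _)
    -- b ≤ αn/50
    have hbn : (B.card : ℝ) ≤ α * n / 50 := by
      have h1 : α * (B.card : ℝ) ≤ α * (α * n / 50) := by
        linarith only [hU, hab]
      exact le_of_mul_le_mul_left h1 hα0
    -- final contradiction
    linarith only [hexp, hL3c, hNle, hsd, hflo, hn2half, hB'cardR, hab, hU1, hU, hαn2,
      hShalf', hαt, hαs, hαu, hαb, hαα, hnn, hbn, hcase, hα0.le, hα1.le]
end

section
/- Every graph with minimum degree at least 10 contains a cycle C together with two chords ab and cd of C whose endpoints interlace along C, i.e., exactly one of c, d lies strictly between a and b on one of the two arcs of C. -/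
/-- `a` and `b` are the endpoints of a chord of the cycle `c`: they are adjacent
in `G`, both lie on `c`, and the edge `ab` is not an edge of `c` (so `a` and `b`
are non-consecutive on `c`). -/
def IsChord {V : Type*} (G : SimpleGraph V) {v : V} (c : G.Walk v v) (a b : V) : Prop :=
  G.Adj a b ∧ a ∈ c.support ∧ b ∈ c.support ∧ s(a, b) ∉ c.edges

/-- The four vertices `a, x, b, y` appear in this cyclic order along the cycle `c`:
some rotation of the list of vertices of `c` contains them in the linear order
`a, x, b, y`. In particular the chords `ab` and `xy` interlace. -/
def CyclicPattern {V : Type*} {G : SimpleGraph V} {v : V} (c : G.Walk v v)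
    (a x b y : V) : Prop :=
  ∃ l : List V, l.IsRotated c.support.tail ∧
    ∃ i j k m : ℕ, i < j ∧ j < k ∧ k < m ∧
      l[i]? = some a ∧ l[j]? = some x ∧ l[k]? = some b ∧ l[m]? = some y


namespace SimpleGraph.Walk

variable {V : Type*} {G : SimpleGraph V} {u v : V}

/-- The walk consisting of the first `n` darts of `p`. -/
def takeN {u v : V} : (p : G.Walk u v) → (n : ℕ) → G.Walk u (p.getVert n)
  | .nil, _ => .nil
  | .cons _ _, 0 => .nil
  | .cons h q, n + 1 => .cons h (takeN q n)

lemma length_takeN : ∀ {u v : V} (p : G.Walk u v) (n : ℕ), n ≤ p.length →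
    (p.takeN n).length = n
  | _, _, .nil, 0, _ => rfl
  | _, _, .cons _ _, 0, _ => rfl
  | _, _, .cons h q, n + 1, hn => by
    simpa [takeN] using length_takeN q n (Nat.succ_le_succ_iff.mp hn)

lemma getVert_takeN : ∀ {u v : V} (p : G.Walk u v) (n i : ℕ), i ≤ n →
    (p.takeN n).getVert i = p.getVert i
  | _, _, .nil, _, _, _ => rfl
  | _, _, .cons _ _, 0, 0, _ => rfl
  | _, _, .cons h q, n + 1, 0, _ => rfl
  | _, _, .cons h q, n + 1, i + 1, hi => by
    simpa [takeN] using getVert_takeN q n i (Nat.succ_le_succ_iff.mp hi)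

lemma support_takeN : ∀ {u v : V} (p : G.Walk u v) (n : ℕ), n ≤ p.length →
    (p.takeN n).support = p.support.take (n + 1)
  | _, _, .nil, 0, _ => rfl
  | _, _, .cons _ _, 0, _ => by simp [takeN]; rfl
  | _, _, .cons h q, n + 1, hn => by
    simp [takeN, support_cons, support_takeN q n (Nat.succ_le_succ_iff.mp hn)]

lemma support_dropN : ∀ {u v : V} (p : G.Walk u v) (n : ℕ), n ≤ p.length →
    (p.drop n).support = p.support.drop n
  | _, _, .nil, 0, _ => rfl
  | _, _, .cons _ _, 0, _ => by simp [Walk.drop]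
  | _, _, .cons h q, n + 1, hn => by
    simpa [Walk.drop, support_cons] using support_dropN q n (Nat.succ_le_succ_iff.mp hn)

lemma length_dropN : ∀ {u v : V} (p : G.Walk u v) (n : ℕ), n ≤ p.length →
    (p.drop n).length = p.length - n
  | _, _, .nil, 0, _ => rfl
  | _, _, .cons _ _, 0, _ => by simp [Walk.drop]
  | _, _, .cons h q, n + 1, hn => by
    simpa [Walk.drop] using length_dropN q n (Nat.succ_le_succ_iff.mp hn)

lemma getVert_dropN : ∀ {u v : V} (p : G.Walk u v) (n j : ℕ),
    (p.drop n).getVert j = p.getVert (n + j)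
  | _, _, .nil, n, j => by simp [Walk.drop, getVert_of_length_le]
  | _, _, .cons _ _, 0, j => by simp [Walk.drop]
  | _, _, .cons h q, n + 1, j => by
    have he : (n + 1 + j) = (n + j) + 1 := by omega
    simp only [Walk.drop, getVert_copy, he, getVert_cons_succ]
    exact getVert_dropN q n j

lemma support_getElem? : ∀ {u v : V} (p : G.Walk u v) (i : ℕ), i ≤ p.length →
    p.support[i]? = some (p.getVert i)
  | _, _, .nil, 0, _ => rfl
  | _, _, .cons _ _, 0, _ => by simp
  | _, _, .cons h q, i + 1, hi => by
    simpa [support_cons] using support_getElem? q i (Nat.succ_le_succ_iff.mp hi)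

lemma getVert_injOn' {p : G.Walk u v} (hp : p.IsPath) {i j : ℕ}
    (hi : i ≤ p.length) (hj : j ≤ p.length) (h : p.getVert i = p.getVert j) : i = j := by
  have h1 : p.support[i]? = p.support[j]? := by
    rw [support_getElem? p i hi, support_getElem? p j hj, h]
  exact List.getElem?_inj (by simpa [length_support] using Nat.lt_succ_of_le hi)
    hp.support_nodup |>.mp h1

lemma exists_getVert_of_mem_edges : ∀ {u v : V} (p : G.Walk u v) {e : Sym2 V},
    e ∈ p.edges → ∃ l, l < p.length ∧ e = s(p.getVert l, p.getVert (l + 1))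
  | _, _, .nil, e, he => by simp [edges_nil] at he
  | _, _, .cons h q, e, he => by
    rw [edges_cons, List.mem_cons] at he
    rcases he with he | he
    · exact ⟨0, by simp, by simpa using he⟩
    · obtain ⟨l, hl, hel⟩ := exists_getVert_of_mem_edges q he
      exact ⟨l + 1, by simpa using Nat.succ_lt_succ hl, by simpa using hel⟩

lemma takeN_isPath {p : G.Walk u v} (hp : p.IsPath) {n : ℕ} (hn : n ≤ p.length) :
    (p.takeN n).IsPath := by
  apply IsPath.mk'
  rw [support_takeN p n hn]
  exact hp.support_nodup.sublist (List.take_sublist _ _)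

end SimpleGraph.Walk

namespace CrossProof

open SimpleGraph Walk

variable {V : Type*} {G : SimpleGraph V}

/-- The conclusion of the theorem. -/
def HasCrossing (G : SimpleGraph V) : Prop :=
  ∃ (v : V) (c : G.Walk v v), c.IsCycle ∧
    ∃ a b x y : V, IsChord G c a b ∧ IsChord G c x y ∧ CyclicPattern c a x b y

lemma IsChord.symm' {v : V} {c : G.Walk v v} {a b : V} (h : IsChord G c a b) :
    IsChord G c b a :=
  ⟨h.1.symm, h.2.2.1, h.2.1, by rw [Sym2.eq_swap]; exact h.2.2.2⟩

lemma goal_of_crossing {u v : V} (Q : G.Walk u v) (hQ : Q.IsPath)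
    {m a b c d : ℕ} (hm : m ≤ Q.length)
    (hab : a < b) (hbc : b < c) (hcd : c < d) (hdm : d ≤ m)
    (hac : a + 2 ≤ c) (hbd : b + 2 ≤ d) (hne : ¬(a = 0 ∧ c = m))
    (h1 : G.Adj (Q.getVert a) (Q.getVert c))
    (h2 : G.Adj (Q.getVert b) (Q.getVert d))
    (hcl : G.Adj u (Q.getVert m)) :
    HasCrossing G := by
  have hm3 : 3 ≤ m := by omega
  set tk := Q.takeN m with htk
  have htkl : tk.length = m := Walk.length_takeN Q m hm
  have htkP : tk.IsPath := Walk.takeN_isPath hQ hm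
  have hgv : ∀ i, i ≤ m → tk.getVert i = Q.getVert i := fun i hi => Walk.getVert_takeN Q m i hi
  have hinj : ∀ i j, i ≤ m → j ≤ m → Q.getVert i = Q.getVert j → i = j := fun i j hi hj h =>
    Walk.getVert_injOn' hQ (le_trans hi hm) (le_trans hj hm) h
  -- membership of an edge of tk forces consecutive indices
  have hedge : ∀ {i j : ℕ}, i ≤ m → j ≤ m → s(Q.getVert i, Q.getVert j) ∈ tk.edges →
      j = i + 1 ∨ i = j + 1 := by
    intro i j hi hj hmem
    obtain ⟨l, hl, hel⟩ := Walk.exists_getVert_of_mem_edges tk hmem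
    rw [htkl] at hl
    rw [hgv l (le_of_lt hl), hgv (l+1) hl] at hel
    rw [Sym2.eq_iff] at hel
    rcases hel with ⟨e1, e2⟩ | ⟨e1, e2⟩
    · left
      rw [hinj i l hi (le_of_lt hl) e1, hinj j (l+1) hj hl e2]
    · right
      rw [hinj i (l+1) hi hl e1, hinj j l hj (le_of_lt hl) e2]
  set cyc : G.Walk u u := Walk.cons hcl tk.reverse with hcycdef
  have hcyc : cyc.IsCycle := by
    rw [hcycdef, Walk.cons_isCycle_iff]
    refine ⟨htkP.reverse, fun hmem => ?_⟩
    rw [Walk.edges_reverse, List.mem_reverse] at hmem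
    have : s(Q.getVert 0, Q.getVert m) ∈ tk.edges := by
      rwa [Q.getVert_zero]
    rcases hedge (Nat.zero_le m) le_rfl this with h | h <;> omega
  have hcs : cyc.support = u :: tk.support.reverse := by
    rw [hcycdef, Walk.support_cons, Walk.support_reverse]
  have hmemc : ∀ i, i ≤ m → Q.getVert i ∈ cyc.support := by
    intro i hi
    rw [hcs]
    refine List.mem_cons_of_mem _ ?_
    rw [List.mem_reverse]
    rw [Walk.mem_support_iff_exists_getVert]
    exact ⟨i, hgv i hi, by omega⟩
  have hchord : ∀ i j, i ≤ m → j ≤ m → i + 2 ≤ j → ¬(i = 0 ∧ j = m) →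
      G.Adj (Q.getVert i) (Q.getVert j) → IsChord G cyc (Q.getVert i) (Q.getVert j) := by
    intro i j hi hj hij hijne hadj
    refine ⟨hadj, hmemc i hi, hmemc j hj, fun hmem => ?_⟩
    rw [hcycdef] at hmem
    rw [Walk.edges_cons, List.mem_cons] at hmem
    rcases hmem with hmem | hmem
    · have hmem' : s(Q.getVert i, Q.getVert j) = s(Q.getVert 0, Q.getVert m) := by
        rw [Q.getVert_zero]; exact hmem
      rw [Sym2.eq_iff] at hmem'
      rcases hmem' with ⟨e1, e2⟩ | ⟨e1, e2⟩
      · have := hinj i 0 hi (by omega) e1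
        have := hinj j m hj le_rfl e2
        omega
      · have := hinj i m hi le_rfl e1
        omega
    · rw [Walk.edges_reverse, List.mem_reverse] at hmem
      rcases hedge hi hj hmem with h | h <;> omega
  have hch1 : IsChord G cyc (Q.getVert a) (Q.getVert c) :=
    hchord a c (by omega) (by omega) hac hne h1
  have hch2 : IsChord G cyc (Q.getVert b) (Q.getVert d) :=
    hchord b d (by omega) (by omega) hbd (by omega) h2
  refine ⟨u, cyc, hcyc, Q.getVert d, Q.getVert b, Q.getVert c, Q.getVert a,
    IsChord.symm' hch2, IsChord.symm' hch1, ?_⟩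
  -- cyclic pattern
  have htail : cyc.support.tail = tk.support.reverse := by rw [hcs]; rfl
  have hslen : tk.support.length = m + 1 := by rw [Walk.length_support, htkl]
  have hget : ∀ i, i ≤ m → cyc.support.tail[i]? = some (Q.getVert (m - i)) := by
    intro i hi
    rw [htail, List.getElem?_reverse (by omega : i < tk.support.length)]
    rw [hslen]
    rw [show m + 1 - 1 - i = m - i from by omega]
    rw [Walk.support_getElem? tk (m - i) (by omega), hgv (m - i) (by omega)]
  refine ⟨cyc.support.tail, List.IsRotated.refl _, m - d, m - c, m - b, m - a,
    by omega, by omega, by omega, ?_, ?_, ?_, ?_⟩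
  · rw [hget (m - d) (by omega), show m - (m - d) = d from by omega]
  · rw [hget (m - c) (by omega), show m - (m - c) = c from by omega]
  · rw [hget (m - b) (by omega), show m - (m - b) = b from by omega]
  · rw [hget (m - a) (by omega), show m - (m - a) = a from by omega]

end CrossProof

namespace CrossProof
section Rot

open SimpleGraph Walk

variable {V : Type*} {G : SimpleGraph V} {u v : V}

/-- Pósa rotation: reverse the initial segment up to position `i - 1` and attach the
edge from `u` to the vertex at position `i`. -/
def rotated (Q : G.Walk u v) (i : ℕ) (h : G.Adj u (Q.getVert i)) :
    G.Walk (Q.getVert (i - 1)) v :=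
  ((Q.takeN (i - 1)).reverse).append (Walk.cons h (Q.drop i))

variable {Q : G.Walk u v} {i : ℕ} {h : G.Adj u (Q.getVert i)}

lemma rotated_length (hi1 : 1 ≤ i) (hiL : i ≤ Q.length) :
    (rotated Q i h).length = Q.length := by
  rw [rotated, Walk.length_append, Walk.length_reverse, Walk.length_cons,
    Walk.length_takeN Q (i-1) (by omega), Walk.length_dropN Q i hiL]
  omega

lemma rotated_support_perm (hi1 : 1 ≤ i) (hiL : i ≤ Q.length) :
    (rotated Q i h).support.Perm Q.support := by
  have h1 : (rotated Q i h).support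
      = (Q.takeN (i-1)).support.reverse ++ (Q.drop i).support := by
    rw [rotated, Walk.support_append, Walk.support_reverse, Walk.support_cons]
    rfl
  have h2 : Q.support = (Q.takeN (i-1)).support ++ (Q.drop i).support := by
    rw [Walk.support_takeN Q (i-1) (by omega), Walk.support_dropN Q i hiL,
      show i - 1 + 1 = i from by omega, List.take_append_drop]
  rw [h1, h2]
  exact (List.reverse_perm _).append_right _

lemma rotated_isPath (hQ : Q.IsPath) (hi1 : 1 ≤ i) (hiL : i ≤ Q.length) :
    (rotated Q i h).IsPath :=
  Walk.IsPath.mk' (((rotated_support_perm hi1 hiL).symm).nodup hQ.support_nodup)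

lemma rotated_getVert_low (hi1 : 1 ≤ i) (hiL : i ≤ Q.length) {r : ℕ} (hr : r ≤ i - 1) :
    (rotated Q i h).getVert r = Q.getVert (i - 1 - r) := by
  rw [rotated, Walk.getVert_append, Walk.length_reverse,
    Walk.length_takeN Q (i-1) (by omega)]
  rcases lt_or_eq_of_le hr with hlt | heq
  · rw [if_pos hlt, Walk.getVert_reverse, Walk.length_takeN Q (i-1) (by omega),
      Walk.getVert_takeN Q (i-1) (i - 1 - r) (by omega)]
  · rw [heq, if_neg (lt_irrefl _), Nat.sub_self]
    simp
lemma rotated_getVert_high (hi1 : 1 ≤ i) (hiL : i ≤ Q.length) {r : ℕ} (hr : i ≤ r) :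
    (rotated Q i h).getVert r = Q.getVert r := by
  rw [rotated, Walk.getVert_append, Walk.length_reverse,
    Walk.length_takeN Q (i-1) (by omega), if_neg (by omega)]
  rw [show r - (i - 1) = (r - i) + 1 from by omega, Walk.getVert_cons_succ,
    Walk.getVert_dropN, show i + (r - i) = r from by omega]

end Rot
end CrossProof

namespace CrossProof
section Main

open SimpleGraph Walk Finset

variable {V : Type*} [Fintype V] [DecidableEq V] {G : SimpleGraph V} [DecidableRel G.Adj]

lemma main_induction (hδ : ∀ w : V, 10 ≤ G.degree w) (L T : ℕ)
    (hL : ∀ (a b : V) (p : G.Walk a b), p.IsPath → p.length ≤ L)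
    (hT : ∀ (a b : V) (p : G.Walk a b), p.IsPath → p.length = L →
        ∀ q, q ≤ L → G.Adj a (p.getVert q) → q ≤ T) :
    ∀ m : ℕ, ∀ (u v : V) (Q : G.Walk u v), Q.IsPath → Q.length = L →
      1 ≤ m → m ≤ L → G.Adj u (Q.getVert m) →
      (∀ q, q ≤ L → G.Adj u (Q.getVert q) → q ≤ m) →
      (∀ r q, 1 ≤ r → r + 9 ≤ m → m < q → q ≤ T → q ≤ L →
          G.Adj (Q.getVert r) (Q.getVert q) → HasCrossing G) →
      HasCrossing G := by
  intro m
  induction m using Nat.strong_induction_on with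
  | _ m ih =>
  intro u v Q hQ hQL hm1 hmL hclose hc hd
  -- Every neighbour of u lies on Q, at a position between 1 and m.
  have hnbr : ∀ w : V, G.Adj u w → w ∈ Q.support := by
    intro w hw
    by_contra hws
    have : (Q.cons hw.symm).IsPath := hQ.cons hws
    have := hL _ _ _ this
    rw [Walk.length_cons, hQL] at this
    omega
  have hpos : ∀ w : V, G.Adj u w →
      ∃ n, Q.getVert n = w ∧ n ≤ L ∧ 1 ≤ n ∧ n ≤ m := by
    intro w hw
    obtain ⟨n, hn, hnL⟩ := Walk.mem_support_iff_exists_getVert.mp (hnbr w hw)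
    rw [hQL] at hnL
    have hn1 : 1 ≤ n := by
      rcases Nat.eq_zero_or_pos n with h0 | h1
      · exfalso; rw [h0, Q.getVert_zero] at hn
        exact G.irrefl (hn ▸ hw)
      · exact h1
    exact ⟨n, hn, hnL, hn1, hc n hnL (by rwa [hn])⟩
  classical
  set posf : V → ℕ := fun w => if hw : G.Adj u w then (hpos w hw).choose else 0 with hposf
  have posf_spec : ∀ w (hw : G.Adj u w), Q.getVert (posf w) = w ∧ posf w ≤ L ∧
      1 ≤ posf w ∧ posf w ≤ m := by
    intro w hw
    rw [hposf]
    simp only [dif_pos hw]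
    exact (hpos w hw).choose_spec
  set P : Finset ℕ := (G.neighborFinset u).image posf with hP
  have hPcard : 10 ≤ P.card := by
    rw [hP, Finset.card_image_of_injOn]
    · rw [card_neighborFinset_eq_degree]; exact hδ u
    · intro w1 hw1 w2 hw2 hee
      rw [mem_coe, mem_neighborFinset] at hw1 hw2
      rw [← (posf_spec w1 hw1).1, ← (posf_spec w2 hw2).1, hee]
  have hPmem : ∀ p ∈ P, 1 ≤ p ∧ p ≤ m ∧ G.Adj u (Q.getVert p) := by
    intro p hp
    rw [hP, Finset.mem_image] at hp
    obtain ⟨w, hw, hwp⟩ := hp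
    rw [mem_neighborFinset] at hw
    obtain ⟨hgw, _, h1, hm'⟩ := posf_spec w hw
    subst hwp
    exact ⟨h1, hm', by rwa [hgw]⟩
  have hPne : P.Nonempty := Finset.card_pos.mp (by omega)
  set p1 : ℕ := P.min' hPne with hp1
  set P' : Finset ℕ := P.erase p1 with hP'
  have hP'card : 9 ≤ P'.card := by
    rw [hP', Finset.card_erase_of_mem (P.min'_mem hPne)]
    omega
  have hP'ne : P'.Nonempty := Finset.card_pos.mp (by omega)
  set i : ℕ := P'.min' hP'ne with hi
  have hiP' : i ∈ P' := P'.min'_mem hP'ne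
  have hiP : i ∈ P := Finset.mem_of_mem_erase hiP'
  have hi2 : 2 ≤ i := by
    have h1 : p1 ≤ i := P.min'_le i hiP
    have h2 : i ≠ p1 := (Finset.mem_erase.mp hiP').1
    have h3 : 1 ≤ p1 := (hPmem p1 (P.min'_mem hPne)).1
    omega
  have hi8 : i + 8 ≤ m := by
    have hsub : P' ⊆ Finset.Icc i m := by
      intro x hx
      rw [Finset.mem_Icc]
      exact ⟨P'.min'_le x hx, (hPmem x (Finset.mem_of_mem_erase hx)).2.1⟩
    have := Finset.card_le_card hsub
    rw [Nat.card_Icc] at this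
    omega
  have hiadj : G.Adj u (Q.getVert i) := (hPmem i hiP).2.2
  have him : i ≤ m := (hPmem i hiP).2.1
  have hiL : i ≤ L := le_trans him hmL
  have hiQL : i ≤ Q.length := by omega
  by_cases hGoal : HasCrossing G
  · exact hGoal
  exfalso
  apply hGoal
  set Q' : G.Walk (Q.getVert (i - 1)) v := rotated Q i hiadj with hQ'
  have hQ'path : Q'.IsPath := rotated_isPath hQ (by omega) hiQL
  have hQ'len : Q'.length = L := by rw [hQ', rotated_length (by omega) hiQL, hQL]
  have hgvlow : ∀ r : ℕ, r ≤ i - 1 → Q'.getVert r = Q.getVert (i - 1 - r) :=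
    fun r hr => rotated_getVert_low (by omega) hiQL hr
  have hgvhigh : ∀ r : ℕ, i ≤ r → Q'.getVert r = Q.getVert r :=
    fun r hr => rotated_getVert_high (by omega) hiQL hr
  -- the closing edge of the new window
  have hb' : G.Adj (Q.getVert (i - 1)) (Q'.getVert i) := by
    rw [hgvhigh i le_rfl]
    have := Q.adj_getVert_succ (i := i - 1) (by omega)
    rwa [show i - 1 + 1 = i from by omega] at this
  -- confinement of the new endpoint
  have hc' : ∀ q, q ≤ L → G.Adj (Q.getVert (i - 1)) (Q'.getVert q) → q ≤ i := by
    intro q hqL hadj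
    by_contra hq
    push_neg at hq
    have hQq : G.Adj (Q.getVert (i - 1)) (Q.getVert q) := by
      rwa [hgvhigh q (by omega)] at hadj
    rcases le_or_gt q m with hqm | hqm
    · refine hGoal (goal_of_crossing Q hQ (m := m) (a := 0) (b := i - 1) (c := i) (d := q)
        (by omega) (by omega) (by omega) (by omega) hqm (by omega) (by omega)
        (by omega) ?_ hQq hclose)
      rwa [Q.getVert_zero]
    · have hqT : q ≤ T := hT _ _ Q' hQ'path hQ'len q hqL hadj
      exact hGoal (hd (i - 1) q (by omega) (by omega) hqm hqT hqL hQq)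
  -- the escape clause for the new window
  have hd' : ∀ r q, 1 ≤ r → r + 9 ≤ i → i < q → q ≤ T → q ≤ L →
      G.Adj (Q'.getVert r) (Q'.getVert q) → HasCrossing G := by
    intro r q hr1 hri hiq hqT hqL hadj
    set s : ℕ := i - 1 - r with hs
    have hs8 : 8 ≤ s := by omega
    have hsi : s + 2 ≤ i := by omega
    have hadj' : G.Adj (Q.getVert s) (Q.getVert q) := by
      rwa [hgvlow r (by omega), hgvhigh q (by omega)] at hadj
    rcases le_or_gt q m with hqm | hqm
    · refine goal_of_crossing Q hQ (m := m) (a := 0) (b := s) (c := i) (d := q)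
        (by omega) (by omega) (by omega) (by omega) hqm (by omega) (by omega)
        (by omega) ?_ hadj' hclose
      rwa [Q.getVert_zero]
    · exact hd s q (by omega) (by omega) hqm hqT hqL hadj'
  -- apply the induction hypothesis at the strictly smaller window `i`
  exact ih i (by omega) _ _ Q' hQ'path hQ'len (by omega) hiL hb' hc' hd'

end Main
end CrossProof

open SimpleGraph Walk in
/-- Every (nonempty) graph of minimum degree at least 10 contains a cycle with two
interlacing chords. -/
theorem stmt3 {V : Type*} [Fintype V] [DecidableEq V] [Nonempty V]
    (G : SimpleGraph V) [DecidableRel G.Adj]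
    (hδ : ∀ v : V, 10 ≤ G.degree v) :
    ∃ (v : V) (c : G.Walk v v), c.IsCycle ∧
      ∃ a b x y : V, IsChord G c a b ∧ IsChord G c x y ∧
        CyclicPattern c a x b y := by
  classical
  show CrossProof.HasCrossing G
  -- maximal path length L
  set S : Set ℕ := {n | ∃ (a b : V) (p : G.Walk a b), p.IsPath ∧ p.length = n} with hS
  have hSne : S.Nonempty :=
    ⟨0, Classical.arbitrary V, Classical.arbitrary V, Walk.nil, Walk.IsPath.nil, rfl⟩
  have hSbdd : BddAbove S := by
    refine ⟨Fintype.card V, fun n hn => ?_⟩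
    obtain ⟨a, b, p, hp, hl⟩ := hn
    have h1 := hp.support_nodup.length_le_card
    rw [Walk.length_support] at h1
    omega
  set L : ℕ := sSup S with hLdef
  have hLS : L ∈ S := Nat.sSup_mem hSne hSbdd
  obtain ⟨a₀, b₀, P₀, hP₀, hP₀L⟩ := hLS
  have hL : ∀ (a b : V) (p : G.Walk a b), p.IsPath → p.length ≤ L :=
    fun a b p hp => le_csSup hSbdd ⟨a, b, p, hp, rfl⟩
  -- all neighbours of the head of a longest path lie on it
  have hnbr : ∀ (a b : V) (p : G.Walk a b), p.IsPath → p.length = L →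
      ∀ w, G.Adj a w → ∃ n, p.getVert n = w ∧ n ≤ L ∧ 1 ≤ n := by
    intro a b p hp hpl w hw
    have hws : w ∈ p.support := by
      by_contra hws
      have h2 := hL _ _ _ (hp.cons hws (h := hw.symm))
      rw [Walk.length_cons, hpl] at h2
      omega
    obtain ⟨n, hn, hnL⟩ := Walk.mem_support_iff_exists_getVert.mp hws
    refine ⟨n, hn, by omega, ?_⟩
    rcases Nat.eq_zero_or_pos n with h0 | h1
    · exfalso; rw [h0, p.getVert_zero] at hn
      exact G.irrefl (hn ▸ hw)
    · exact h1
  -- maximal reach T among longest paths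
  set S2 : Set ℕ := {n | n ≤ L ∧ ∃ (a b : V) (p : G.Walk a b),
      p.IsPath ∧ p.length = L ∧ G.Adj a (p.getVert n)} with hS2
  have hS2ne : S2.Nonempty := by
    have hdeg : 0 < G.degree a₀ := lt_of_lt_of_le (by norm_num) (hδ a₀)
    rw [← SimpleGraph.card_neighborFinset_eq_degree] at hdeg
    obtain ⟨w, hw⟩ := Finset.card_pos.mp hdeg
    rw [SimpleGraph.mem_neighborFinset] at hw
    obtain ⟨n, hn, hnL, hn1⟩ := hnbr a₀ b₀ P₀ hP₀ hP₀L w hw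
    exact ⟨n, hnL, a₀, b₀, P₀, hP₀, hP₀L, by rwa [hn]⟩
  have hS2bdd : BddAbove S2 := ⟨L, fun n hn => hn.1⟩
  set T : ℕ := sSup S2 with hTdef
  have hTS2 : T ∈ S2 := Nat.sSup_mem hS2ne hS2bdd
  obtain ⟨hTL, u₀, v₀, Q₀, hQ₀, hQ₀L, hQ₀adj⟩ := hTS2
  have hT : ∀ (a b : V) (p : G.Walk a b), p.IsPath → p.length = L →
      ∀ q, q ≤ L → G.Adj a (p.getVert q) → q ≤ T :=
    fun a b p hp hpl q hq hadj => le_csSup hS2bdd ⟨hq, a, b, p, hp, hpl, hadj⟩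
  have hT1 : 1 ≤ T := by
    rcases Nat.eq_zero_or_pos T with h0 | h1
    · exfalso
      rw [h0, Q₀.getVert_zero] at hQ₀adj
      exact G.irrefl hQ₀adj
    · exact h1
  exact CrossProof.main_induction hδ L T hL hT T u₀ v₀ Q₀ hQ₀ hQ₀L hT1 hTL hQ₀adj
    (fun q hq hadj => hT _ _ _ hQ₀ hQ₀L q hq hadj)
    (fun r q _ _ h1 h2 _ _ => absurd h2 (by omega))
end

section
/- Let T be a rooted tree on s vertices with depth at most h, and call a non-leaf vertex y of T dangerous if the union of the components of T − y not containing the root has size at least s/k (for a parameter k ≥ 1). Then the number of dangerous vertices is at most h·k. -/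
/-- In a tree `G` rooted at `r`, `u` is an ancestor of `v` iff
`dist r u + dist u v = dist r v`. -/
def IsAncestor {V : Type*} (G : SimpleGraph V) (r u v : V) : Prop :=
  G.dist r u + G.dist u v = G.dist r v

/-- Ancestors of a fixed vertex with the same distance from the root coincide. -/
lemma ancestor_eq_of_dist_eq {V : Type*} {G : SimpleGraph V} (hT : G.IsTree)
    {r w y₁ y₂ : V} (h1 : IsAncestor G r y₁ w) (h2 : IsAncestor G r y₂ w)
    (hd : G.dist r y₁ = G.dist r y₂) : y₁ = y₂ := by
  obtain ⟨p₁, hp₁, hp₁l⟩ := hT.isConnected.exists_path_of_dist r y₁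
  obtain ⟨q₁, hq₁, hq₁l⟩ := hT.isConnected.exists_path_of_dist y₁ w
  obtain ⟨p₂, hp₂, hp₂l⟩ := hT.isConnected.exists_path_of_dist r y₂
  obtain ⟨q₂, hq₂, hq₂l⟩ := hT.isConnected.exists_path_of_dist y₂ w
  have hP₁ : (p₁.append q₁).IsPath := by
    apply SimpleGraph.Walk.isPath_of_length_eq_dist
    rw [SimpleGraph.Walk.length_append, hp₁l, hq₁l]
    exact h1
  have hP₂ : (p₂.append q₂).IsPath := by
    apply SimpleGraph.Walk.isPath_of_length_eq_dist
    rw [SimpleGraph.Walk.length_append, hp₂l, hq₂l]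
    exact h2
  have huniq := hT.existsUnique_path r w
  have hPeq : p₁.append q₁ = p₂.append q₂ := huniq.unique hP₁ hP₂
  have h₁ : (p₁.append q₁).getVert (G.dist r y₁) = y₁ := by
    rw [SimpleGraph.Walk.getVert_append, ← hp₁l]
    simp [SimpleGraph.Walk.getVert_zero]
  have h₂ : (p₂.append q₂).getVert (G.dist r y₂) = y₂ := by
    rw [SimpleGraph.Walk.getVert_append, ← hp₂l]
    simp [SimpleGraph.Walk.getVert_zero]
  rw [← h₁, ← h₂, hPeq, hd]

/-- Dangerous vertices: let `T` be a rooted tree on `s` vertices of depth at most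
`h`, `k ≥ 1`. A non-root, non-leaf vertex `y` is dangerous if the part of `T − y`
not containing the root (its set of proper descendants) has at least `s/k`
vertices. Then there are at most `h·k` dangerous vertices. -/
theorem stmt7 {V : Type*} [Fintype V] [DecidableEq V] (G : SimpleGraph V)
    [DecidableRel G.Adj] (hT : G.IsTree)
    (r : V) (s : ℕ) (hs : Fintype.card V = s)
    (h : ℕ) (hdepth : ∀ v : V, G.dist r v ≤ h) (k : ℝ) (hk : 1 ≤ k) :
    (({y : V | y ≠ r ∧ 2 ≤ G.degree y ∧
        (s : ℝ) / k ≤ ({w : V | IsAncestor G r y w ∧ w ≠ y}.ncard : ℝ)}.ncard : ℝ))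
      ≤ h * k := by
  classical
  have hk0 : (0:ℝ) < k := lt_of_lt_of_le zero_lt_one hk
  by_cases hs0 : s = 0
  · -- V is empty
    have hV : IsEmpty V := Fintype.card_eq_zero_iff.mp (by rw [hs, hs0])
    have : ({y : V | y ≠ r ∧ 2 ≤ G.degree y ∧
        (s : ℝ) / k ≤ ({w : V | IsAncestor G r y w ∧ w ≠ y}.ncard : ℝ)}) = ∅ :=
      Set.eq_empty_of_isEmpty _
    rw [this]
    simp
    positivity
  -- main case
  set B : V → Finset V := fun y => Finset.univ.filter (fun w => IsAncestor G r y w ∧ w ≠ y)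
    with hB
  set D : Finset V := Finset.univ.filter (fun y => y ≠ r ∧ 2 ≤ G.degree y ∧
      (s : ℝ) / k ≤ ((B y).card : ℝ)) with hD
  have hBcard : ∀ y : V, ({w : V | IsAncestor G r y w ∧ w ≠ y}.ncard) = (B y).card := by
    intro y
    rw [← Set.ncard_coe_finset]
    congr 1
    ext w
    simp [hB]
  have hDcard : ({y : V | y ≠ r ∧ 2 ≤ G.degree y ∧
      (s : ℝ) / k ≤ ({w : V | IsAncestor G r y w ∧ w ≠ y}.ncard : ℝ)}.ncard) = D.card := by
    rw [← Set.ncard_coe_finset]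
    congr 1
    ext y
    simp [hD, hBcard y]
  rw [hDcard]
  -- per-vertex bound: each w has at most h proper ancestors ≠ r
  have hanc : ∀ w : V, (D.filter (fun y => IsAncestor G r y w ∧ w ≠ y)).card ≤ h := by
    intro w
    have : (D.filter (fun y => IsAncestor G r y w ∧ w ≠ y)).card ≤ (Finset.Icc 1 h).card := by
      apply Finset.card_le_card_of_injOn (fun y => G.dist r y)
      · intro y hy
        simp only [Finset.mem_coe, Finset.mem_filter, hD, Finset.mem_univ, true_and] at hy
        obtain ⟨⟨hyr, -, -⟩, -, -⟩ := hy
        rw [Finset.mem_coe, Finset.mem_Icc]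
        exact ⟨hT.isConnected.pos_dist_of_ne hyr.symm, hdepth y⟩
      · intro y₁ h₁ y₂ h₂ hd
        simp only [Finset.coe_filter, Set.mem_setOf_eq] at h₁ h₂
        exact ancestor_eq_of_dist_eq hT h₁.2.1 h₂.2.1 hd
    simpa using this
  -- double counting
  have hsum : ∑ y ∈ D, (B y).card ≤ s * h := by
    have : ∑ y ∈ D, (B y).card
        = ∑ w : V, (D.filter (fun y => IsAncestor G r y w ∧ w ≠ y)).card := by
      simp only [hB, Finset.card_filter]
      rw [Finset.sum_comm]
    rw [this]
    calc ∑ w : V, (D.filter (fun y => IsAncestor G r y w ∧ w ≠ y)).card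
        ≤ ∑ _w : V, h := Finset.sum_le_sum (fun w _ => hanc w)
      _ = s * h := by rw [Finset.sum_const, Finset.card_univ, hs, smul_eq_mul]
  -- lower bound for the sum
  have hlow : (D.card : ℝ) * ((s:ℝ)/k) ≤ ∑ y ∈ D, ((B y).card : ℝ) := by
    calc (D.card : ℝ) * ((s:ℝ)/k) = ∑ _y ∈ D, ((s:ℝ)/k) := by
          rw [Finset.sum_const, nsmul_eq_mul]
      _ ≤ ∑ y ∈ D, ((B y).card : ℝ) := by
          apply Finset.sum_le_sum
          intro y hy
          simp only [hD, Finset.mem_filter] at hy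
          exact hy.2.2.2
  have hsumR : (∑ y ∈ D, ((B y).card : ℝ)) ≤ (s : ℝ) * h := by
    push_cast [← Nat.cast_sum]
    exact_mod_cast hsum
  have hs1 : (0:ℝ) < s := by
    exact_mod_cast Nat.pos_of_ne_zero hs0
  have hb : (0:ℝ) < (s:ℝ)/k := div_pos hs1 hk0
  have hmain : (D.card : ℝ) * ((s:ℝ)/k) ≤ (s:ℝ) * h := le_trans hlow hsumR
  have hfinal : (D.card : ℝ) ≤ ((s:ℝ) * h) / ((s:ℝ)/k) := (le_div_iff₀ hb).mpr hmain
  have heq : ((s:ℝ) * h) / ((s:ℝ)/k) = h * k := by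
    field_simp
  rwa [heq] at hfinal
end

section
/- Let C be a cycle in a graph G with a chord e, let P₁ be one of the two arcs of C determined by the endpoints of e, and let Q be a path of length q with both endpoints on P₁, internally disjoint from C, whose endpoints cut out a subpath of P₁ of length at least q + 1 not containing any endpoint of the chord e. Then replacing the subpath of P₁ between the endpoints of Q by Q yields a cycle C' with |C'| < |C| such that e is a chord of C'. -/
open SimpleGraph Walk

/-- In a path from `u` to `v`, if the edge `s(u,v)` occurs, the path has length 1. -/
lemma aux_edge_ends {V : Type*} {G : SimpleGraph V} {u v : V} (p : G.Walk u v)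
    (hp : p.IsPath) (h : s(u, v) ∈ p.edges) : p.length = 1 := by
  cases p with
  | nil => simp at h
  | @cons _ w _ hadj q =>
    rw [Walk.edges_cons, List.mem_cons] at h
    rcases h with h | h
    · rw [Sym2.eq_iff] at h
      rcases h with ⟨-, rfl⟩ | ⟨h1, h2⟩
      · have : q.IsPath := (Walk.cons_isPath_iff _ _).mp hp |>.1
        have hq : q = Walk.nil := Walk.isPath_iff_eq_nil.mp this
        simp [hq]
      · exact absurd h1 hadj.ne
    · have : u ∈ q.support := q.fst_mem_support_of_mem_edges h
      exact absurd this ((Walk.cons_isPath_iff _ _).mp hp).2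

/-- Auxiliary: end of a nontrivial walk is in the support tail. -/
lemma aux_end_mem_tail {V : Type*} {G : SimpleGraph V} {u v : V} (p : G.Walk u v)
    (hp : p.length ≠ 0) : v ∈ p.support.tail := by
  cases p with
  | nil => simp at hp
  | cons h q => simpa using q.end_mem_support

/-- Shortcutting a chorded cycle. Let the cycle `C = P ++ W` (with `P` an arc from
`x` to `y` and `W` the rest), let `ab` be a chord of `C` whose endpoints lie on `W`
and off `P`, and let `Q` be an `x`–`y` path internally disjoint from `C` with
`|Q| + 1 ≤ |P|`. Then there is a strictly shorter cycle (namely `Q ++ W`) which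
still has `ab` as a chord. -/
theorem stmt14 {V : Type*} (G : SimpleGraph V) {x y : V}
    (P : G.Walk x y) (W : G.Walk y x) (Q : G.Walk x y)
    (hC : (P.append W).IsCycle) (hQ : Q.IsPath)
    (hdisj : ∀ u ∈ Q.support, u ∈ (P.append W).support → u = x ∨ u = y)
    (a b : V) (hab : G.Adj a b)
    (haW : a ∈ W.support) (hbW : b ∈ W.support)
    (haP : a ∉ P.support) (hbP : b ∉ P.support)
    (hchord : s(a, b) ∉ (P.append W).edges)
    (hlen : Q.length + 1 ≤ P.length) :
    ∃ c' : G.Walk x x, c'.IsCycle ∧ c'.length < (P.append W).length ∧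
      a ∈ c'.support ∧ b ∈ c'.support ∧ s(a, b) ∉ c'.edges := by
  classical
  -- basic memberships
  have hax : a ≠ x := fun h => haP (h ▸ P.start_mem_support)
  have hay : a ≠ y := fun h => haP (h ▸ P.end_mem_support)
  have hbx : b ≠ x := fun h => hbP (h ▸ P.start_mem_support)
  have hby : b ≠ y := fun h => hbP (h ▸ P.end_mem_support)
  have haC : a ∈ (P.append W).support := (Walk.mem_support_append_iff _ _).mpr (Or.inr haW)
  have hbC : b ∈ (P.append W).support := (Walk.mem_support_append_iff _ _).mpr (Or.inr hbW)
  -- a, b are not on Q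
  have haQ : a ∉ Q.support := fun h => by
    rcases hdisj a h haC with rfl | rfl
    · exact hax rfl
    · exact hay rfl
  have hbQ : b ∉ Q.support := fun h => by
    rcases hdisj b h hbC with rfl | rfl
    · exact hbx rfl
    · exact hby rfl
  -- tail of the cycle's support
  have hnd : (P.support.tail ++ W.support.tail).Nodup := by
    have := hC.support_nodup
    rwa [Walk.tail_support_append] at this
  have hndP : P.support.tail.Nodup := (List.nodup_append.mp hnd).1
  have hndW : W.support.tail.Nodup := (List.nodup_append.mp hnd).2.1
  have hdisjPW : ∀ u ∈ P.support.tail, u ∉ W.support.tail := by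
    intro u hu hu'
    exact (List.disjoint_of_nodup_append hnd) hu hu'
  have hPlen : P.length ≠ 0 := by omega
  have hyP : y ∈ P.support.tail := aux_end_mem_tail P hPlen
  have hyW : y ∉ W.support.tail := hdisjPW y hyP
  -- a is in W's support tail; W is long
  have haWt : a ∈ W.support.tail := by
    rw [W.support_eq_cons] at haW
    rcases List.mem_cons.mp haW with h | h
    · exact absurd h hay
    · exact h
  have hWlen : W.length ≠ 0 := by
    intro h
    have : W.support.tail = [] := by
      have := W.length_support
      rw [h] at this
      cases hs : W.support with
      | nil => simp [hs] at this
      | cons c l => rw [hs] at this; simp at this; simp [this]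
    rw [this] at haWt; simp at haWt
  have hxWt : x ∈ W.support.tail := aux_end_mem_tail W hWlen
  -- W is a path
  have hWedges : W.edges.Nodup := by
    have := hC.isCircuit.isTrail.edges_nodup
    rw [Walk.edges_append] at this
    exact (List.nodup_append.mp this).2.1
  have hWpath : W.IsPath := by
    refine ⟨⟨hWedges⟩, ?_⟩
    rw [W.support_eq_cons]
    exact List.nodup_cons.mpr ⟨hyW, hndW⟩
  -- W has length ≥ 2 (since a is an interior vertex)
  have hWlen2 : W.length ≠ 1 := by
    intro h
    have h2 := W.length_support
    rw [h] at h2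
    have h3 : W.support.tail.length = 1 := by
      rw [W.support_eq_cons] at h2; simpa using h2
    rcases List.length_eq_one_iff.mp h3 with ⟨c, hc⟩
    rw [hc] at haWt hxWt
    simp at haWt hxWt
    exact hax (haWt.trans hxWt.symm)
  -- edges of Q and W are disjoint
  have hedisj : ∀ e ∈ Q.edges, e ∉ W.edges := by
    intro e heQ heW
    induction e with
    | h u v =>
      have huQ : u ∈ Q.support := Q.fst_mem_support_of_mem_edges heQ
      have hvQ : v ∈ Q.support := Q.snd_mem_support_of_mem_edges heQ
      have huW : u ∈ W.support := W.fst_mem_support_of_mem_edges heW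
      have hvW : v ∈ W.support := W.snd_mem_support_of_mem_edges heW
      have huC : u ∈ (P.append W).support := (Walk.mem_support_append_iff _ _).mpr (Or.inr huW)
      have hvC : v ∈ (P.append W).support := (Walk.mem_support_append_iff _ _).mpr (Or.inr hvW)
      have hne : u ≠ v := (Q.edges_subset_edgeSet heQ).ne
      have hexy : s(u, v) = s(y, x) := by
        rcases hdisj u huQ huC with rfl | rfl <;> rcases hdisj v hvQ hvC with rfl | rfl
        · exact absurd rfl hne
        · exact Sym2.eq_swap
        · rfl
        · exact absurd rfl hne
      rw [hexy] at heW
      exact hWlen2 (aux_edge_ends W hWpath heW)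
  -- the new cycle
  refine ⟨Q.append W, ?_, ?_, ?_, ?_, ?_⟩
  · refine ⟨⟨⟨?_⟩, ?_⟩, ?_⟩
    · rw [Walk.edges_append]
      exact List.nodup_append'.mpr ⟨hQ.isTrail.edges_nodup, hWedges, hedisj⟩
    · intro h
      have := congrArg Walk.length h
      rw [Walk.length_append] at this
      simp at this
      exact hWlen (Walk.nil_iff_length_eq.mp this.2)
    · rw [Walk.tail_support_append]
      refine List.nodup_append'.mpr ⟨hQ.support_nodup.tail, hndW, ?_⟩
      intro u hu hu'
      have huQ : u ∈ Q.support := List.mem_of_mem_tail hu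
      have huW : u ∈ W.support := List.mem_of_mem_tail hu'
      have huC : u ∈ (P.append W).support := (Walk.mem_support_append_iff _ _).mpr (Or.inr huW)
      rcases hdisj u huQ huC with rfl | rfl
      · have : Q.support.Nodup := hQ.support_nodup
        rw [Q.support_eq_cons] at this
        exact (List.nodup_cons.mp this).1 hu
      · exact hyW hu'
  · rw [Walk.length_append, Walk.length_append]
    omega
  · exact (Walk.mem_support_append_iff _ _).mpr (Or.inr haW)
  · exact (Walk.mem_support_append_iff _ _).mpr (Or.inr hbW)
  · rw [Walk.edges_append]
    intro h
    rcases List.mem_append.mp h with h | h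
    · exact haQ (Q.fst_mem_support_of_mem_edges h)
    · exact hchord (by rw [Walk.edges_append]; exact List.mem_append.mpr (Or.inr h))
end

section
/- Let G be a graph containing k pairwise vertex-disjoint cycles C₁, …, C_k, each of length at most M and each having at least one chord, together with pairwise vertex-disjoint paths P₁, …, P_k, each of length at most M, where P_i joins a vertex of C_i to a vertex of C_{i+1} (indices mod k), such that for each i the two path-endpoints on C_i are distinct and the chord of C_i has both endpoints on one of the two arcs of C_i between the two path-endpoints (internally). Then G contains a single cycle of length ℓ ≤ 2kM that has at least k chords. -/
open SimpleGraph Walk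
open Fin.NatCast Fin.CommRing

/-- The big walk obtained by concatenating the segments `S i : w i → w (i+1)`. -/
def stmt15Walk {V : Type*} {G : SimpleGraph V} {k : ℕ} [NeZero k] {w : Fin k → V}
    (S : ∀ i : Fin k, G.Walk (w i) (w (i + 1))) :
    (n : ℕ) → (i : Fin k) → G.Walk (w i) (w (i + (n : Fin k)))
  | 0, i => SimpleGraph.Walk.nil.copy rfl (by norm_num)
  | n + 1, i => (S i).append ((stmt15Walk S n (i + 1)).copy rfl
      (by congr 1; push_cast; ring))

lemma stmt15_finite {V : Type*} {G : SimpleGraph V} {z : V} (c : G.Walk z z) :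
    {e : Sym2 V | e ∈ G.edgeSet ∧ (∀ v ∈ e, v ∈ c.support) ∧ e ∉ c.edges}.Finite := by
  classical
  apply Set.Finite.subset (Set.Finite.image (fun pr : V × V => s(pr.1, pr.2))
    ((c.support.toFinset ×ˢ c.support.toFinset : Finset (V × V)).finite_toSet))
  rintro e ⟨-, h2, -⟩
  induction e with
  | _ x y =>
    refine ⟨(x, y), ?_, rfl⟩
    simp only [Finset.coe_product, Set.mem_prod, List.coe_toFinset, Set.mem_setOf_eq]
    exact ⟨h2 x (by simp), h2 y (by simp)⟩

lemma stmt15_count {V : Type*} {G : SimpleGraph V} {k : ℕ} (a b : Fin k → V) {z : V}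
    (c : G.Walk z z)
    (hinj : Function.Injective (fun i => s(a i, b i)))
    (hadj : ∀ i, G.Adj (a i) (b i))
    (ha : ∀ i, a i ∈ c.support) (hb : ∀ i, b i ∈ c.support)
    (hne : ∀ i, s(a i, b i) ∉ c.edges) :
    k ≤ {e : Sym2 V | e ∈ G.edgeSet ∧ (∀ v ∈ e, v ∈ c.support) ∧ e ∉ c.edges}.ncard := by
  have hsub : Set.range (fun i => s(a i, b i)) ⊆
      {e : Sym2 V | e ∈ G.edgeSet ∧ (∀ v ∈ e, v ∈ c.support) ∧ e ∉ c.edges} := by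
    rintro e ⟨i, rfl⟩
    refine ⟨(hadj i), ?_, hne i⟩
    intro v hv
    rcases Sym2.mem_iff.mp hv with rfl | rfl
    · exact ha i
    · exact hb i
  have hr : (Set.range fun i => s(a i, b i)).ncard = k := by
    rw [← Set.image_univ, Set.ncard_image_of_injective _ hinj, Set.ncard_univ,
      Nat.card_eq_fintype_card, Fintype.card_fin]
  rw [← hr]
  exact Set.ncard_le_ncard hsub (stmt15_finite c)

/-- Joining chorded cycles into one cycle with many chords. For `i : Fin k`, let
`C_i = A_i ++ B_i` be a cycle of length at most `M`, where `A_i` is the arc of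
`C_i` from `w_i` to `u_i`, with a chord `a_i b_i` both of whose endpoints are
internal vertices of the arc `A_i`. Let `P_i` be a path of length at most `M`
from `u_i` (on `C_i`) to `w_{i+1}` (on `C_{i+1}`, indices mod `k`). Suppose the
cycles are pairwise vertex-disjoint, the paths are pairwise vertex-disjoint, and
each path meets the cycles only in its two endpoints. Then `G` contains a cycle of
length at most `2kM` with at least `k` chords. -/
theorem stmt15 {V : Type*} (G : SimpleGraph V) (k M : ℕ) [NeZero k]
    (w u a b : Fin k → V)
    (A : ∀ i : Fin k, G.Walk (w i) (u i)) (B : ∀ i : Fin k, G.Walk (u i) (w i))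
    (p : ∀ i : Fin k, G.Walk (u i) (w (i + 1)))
    (hcyc : ∀ i, ((A i).append (B i)).IsCycle)
    (hclen : ∀ i, ((A i).append (B i)).length ≤ M)
    (hchord : ∀ i, G.Adj (a i) (b i))
    (haA : ∀ i, a i ∈ (A i).support) (hbA : ∀ i, b i ∈ (A i).support)
    (haw : ∀ i, a i ≠ w i) (hau : ∀ i, a i ≠ u i)
    (hbw : ∀ i, b i ≠ w i) (hbu : ∀ i, b i ≠ u i)
    (hnotedge : ∀ i, s(a i, b i) ∉ ((A i).append (B i)).edges)
    (hp : ∀ i, (p i).IsPath) (hplen : ∀ i, (p i).length ≤ M)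
    (hcycdisj : ∀ i j, i ≠ j → ∀ z ∈ ((A i).append (B i)).support,
      z ∉ ((A j).append (B j)).support)
    (hpdisj : ∀ i j, i ≠ j → ∀ z ∈ (p i).support, z ∉ (p j).support)
    (hpc : ∀ i j, ∀ z ∈ (p i).support, z ∈ ((A j).append (B j)).support →
      (j = i ∧ z = u i) ∨ (j = i + 1 ∧ z = w (i + 1))) :
    ∃ (z : V) (c' : G.Walk z z), c'.IsCycle ∧ c'.length ≤ 2 * k * M ∧
      k ≤ {e : Sym2 V | e ∈ G.edgeSet ∧ (∀ v ∈ e, v ∈ c'.support) ∧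
            e ∉ c'.edges}.ncard := by
  classical
  have hCa : ∀ i, a i ∈ ((A i).append (B i)).support := fun i =>
    (Walk.mem_support_append_iff _ _).mpr (Or.inl (haA i))
  have hCb : ∀ i, b i ∈ ((A i).append (B i)).support := fun i =>
    (Walk.mem_support_append_iff _ _).mpr (Or.inl (hbA i))
  have hinj : Function.Injective (fun i : Fin k => s(a i, b i)) := by
    intro i j h
    by_contra hij
    simp only [Sym2.eq_iff] at h
    have haj : a i ∈ ((A j).append (B j)).support := by
      rcases h with ⟨h1, -⟩ | ⟨h1, -⟩
      · rw [h1]; exact hCa j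
      · rw [h1]; exact hCb j
    exact hcycdisj i j hij (a i) (hCa i) haj
  rcases eq_or_lt_of_le (Nat.one_le_iff_ne_zero.mpr (NeZero.ne k)) with hk1 | hk2
  · -- k = 1 : the cycle C₀ itself works
    subst hk1
    refine ⟨w 0, (A 0).append (B 0), hcyc 0, ?_, ?_⟩
    · calc ((A 0).append (B 0)).length ≤ M := hclen 0
        _ = 1 * M := (one_mul M).symm
        _ ≤ 2 * 1 * M := Nat.mul_le_mul_right M (by norm_num)
    · refine stmt15_count a b _ hinj hchord ?_ ?_ ?_
      · intro i; rw [Subsingleton.elim i 0]; exact hCa 0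
      · intro i; rw [Subsingleton.elim i 0]; exact hCb 0
      · intro i; rw [Subsingleton.elim i 0]; exact hnotedge 0
  · -- k ≥ 2
    have hone : (1 : Fin k) ≠ 0 := by
      intro h
      have h1 : ((1 : ℕ) : Fin k) = 0 := by simpa using h
      rw [Fin.natCast_eq_zero] at h1
      have := Nat.le_of_dvd Nat.one_pos h1
      omega
    have hne1 : ∀ i : Fin k, i + 1 ≠ i := by
      intro i h
      exact hone (by simpa using h)
    have hstep : ∀ i, u (i + 1) ≠ w (i + 1) := by
      intro i hj
      have h1 : w (i + 1) ∈ (p i).support := (p i).end_mem_support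
      have h2 : w (i + 1) ∈ (p (i + 1)).support := by
        rw [← hj]; exact (p (i + 1)).start_mem_support
      exact hpdisj i (i + 1) (Ne.symm (hne1 i)) (w (i + 1)) h1 h2
    have huw : ∀ j, u j ≠ w j := by
      intro j
      have hsb : (j - 1) + 1 = j := sub_add_cancel j 1
      have := hstep (j - 1)
      rwa [hsb] at this
    have hApath : ∀ i, (A i).IsPath := by
      intro i
      apply Walk.IsPath.mk'
      have hc := (hcyc i).support_nodup
      rw [Walk.tail_support_append] at hc
      obtain ⟨hA, hB, hdisj⟩ := List.nodup_append.mp hc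
      rw [(A i).support_eq_cons]
      refine List.nodup_cons.mpr ⟨?_, hA⟩
      intro hwA
      -- w i is in the tail of B's support
      have hBlen : (B i).length ≠ 0 := fun h => huw i (Walk.eq_of_length_eq_zero h)
      have hwB : w i ∈ (B i).support.tail := by
        have h1 := (B i).end_mem_support
        rw [(B i).support_eq_cons] at h1
        rcases List.mem_cons.mp h1 with h2 | h2
        · exact absurd h2.symm (huw i)
        · exact h2
      exact hdisj _ hwA _ hwB rfl
    have hAtail : ∀ i, w i ∉ (A i).support.tail := by
      intro i hwi
      have := (hApath i).support_nodup
      rw [(A i).support_eq_cons] at this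
      exact (List.nodup_cons.mp this).1 hwi
    have hptail : ∀ i, u i ∉ (p i).support.tail := by
      intro i hui
      have := (hp i).support_nodup
      rw [(p i).support_eq_cons] at this
      exact (List.nodup_cons.mp this).1 hui
    -- the segments
    set S : ∀ i : Fin k, G.Walk (w i) (w (i + 1)) := fun i => (A i).append (p i) with hSdef
    have hwnotp : ∀ i, w i ∉ (p i).support := by
      intro i hwp
      rcases hpc i i (w i) hwp ((Walk.mem_support_append_iff _ _).mpr
        (Or.inl (A i).start_mem_support)) with ⟨-, h⟩ | ⟨hii, -⟩
      · exact huw i h.symm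
      · exact hne1 i hii.symm
    have hSpath : ∀ i, (S i).IsPath := by
      intro i
      apply Walk.IsPath.mk'
      rw [hSdef]
      simp only []
      rw [Walk.support_append]
      refine List.nodup_append.mpr ⟨(hApath i).support_nodup, ?_, ?_⟩
      · have := (hp i).support_nodup
        rw [(p i).support_eq_cons] at this
        exact (List.nodup_cons.mp this).2
      · rintro z hzA _ hzp rfl
        have hzp' : z ∈ (p i).support := List.mem_of_mem_tail hzp
        have hzc : z ∈ ((A i).append (B i)).support :=
          (Walk.mem_support_append_iff _ _).mpr (Or.inl hzA)
        rcases hpc i i z hzp' hzc with ⟨-, h⟩ | ⟨hii, -⟩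
        · rw [h] at hzp; exact hptail i hzp
        · exact hne1 i hii.symm
    have hSsub : ∀ i z, z ∈ (S i).support →
        z ∈ ((A i).append (B i)).support ∨ z ∈ (p i).support := by
      intro i z hz
      rw [hSdef] at hz
      rcases (Walk.mem_support_append_iff _ _).mp hz with h | h
      · exact Or.inl ((Walk.mem_support_append_iff _ _).mpr (Or.inl h))
      · exact Or.inr h
    have hwStail : ∀ i, w i ∉ (S i).support.tail := by
      intro i h
      rw [hSdef] at h
      rw [Walk.tail_support_append] at h
      rcases List.mem_append.mp h with h | h
      · exact hAtail i h
      · exact hwnotp i (List.mem_of_mem_tail h)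
    -- pairwise disjointness of segment tails
    have hTdisj : ∀ i j, i ≠ j → ∀ z ∈ (S i).support.tail, z ∉ (S j).support.tail := by
      intro i j hij z hzi hzj
      have hzi' := hSsub i z (List.mem_of_mem_tail hzi)
      have hzj' := hSsub j z (List.mem_of_mem_tail hzj)
      rcases hzi' with hci | hpi <;> rcases hzj' with hcj | hpj
      · exact hcycdisj i j hij z hci hcj
      · rcases hpc j i z hpj hci with ⟨hji, -⟩ | ⟨hij2, hz⟩
        · exact hij hji
        · rw [← hij2] at hz
          rw [hz] at hzi
          exact hwStail i hzi
      · rcases hpc i j z hpi hcj with ⟨hji, -⟩ | ⟨hij2, hz⟩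
        · exact hij hji.symm
        · rw [← hij2] at hz
          rw [hz] at hzj
          exact hwStail j hzj
      · exact hpdisj i j hij z hpi hpj
    -- pairwise disjointness of segment edges
    have hEdisj : ∀ i j, i ≠ j → ∀ e ∈ (S i).edges, e ∉ (S j).edges := by
      intro i j hij e
      induction e with
      | _ x y =>
        intro hei hej
        have hxy : x ≠ y := ((S i).adj_of_mem_edges hei).ne
        rw [hSdef] at hei hej
        rw [Walk.edges_append] at hei hej
        have key : ∀ i' j', i' ≠ j' → s(x, y) ∈ (A i').edges → s(x, y) ∈ (p j').edges →
            False := by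
          intro i' j' hij' hA hp'
          have hxc : x ∈ ((A i').append (B i')).support :=
            (Walk.mem_support_append_iff _ _).mpr
              (Or.inl ((A i').fst_mem_support_of_mem_edges hA))
          have hyc : y ∈ ((A i').append (B i')).support :=
            (Walk.mem_support_append_iff _ _).mpr
              (Or.inl ((A i').snd_mem_support_of_mem_edges hA))
          have hxp : x ∈ (p j').support := (p j').fst_mem_support_of_mem_edges hp'
          have hyp : y ∈ (p j').support := (p j').snd_mem_support_of_mem_edges hp'
          rcases hpc j' i' x hxp hxc with ⟨h1, -⟩ | ⟨-, hx⟩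
          · exact hij' h1
          · rcases hpc j' i' y hyp hyc with ⟨h1, -⟩ | ⟨-, hy⟩
            · exact hij' h1
            · exact hxy (hx.trans hy.symm)
        rcases List.mem_append.mp hei with hAi | hpi <;>
          rcases List.mem_append.mp hej with hAj | hpj
        · exact hcycdisj i j hij x
            ((Walk.mem_support_append_iff _ _).mpr
              (Or.inl ((A i).fst_mem_support_of_mem_edges hAi)))
            ((Walk.mem_support_append_iff _ _).mpr
              (Or.inl ((A j).fst_mem_support_of_mem_edges hAj)))
        · exact key i j hij hAi hpj
        · exact key j i (Ne.symm hij) hAj hpi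
        · exact hpdisj i j hij x ((p i).fst_mem_support_of_mem_edges hpi)
            ((p j).fst_mem_support_of_mem_edges hpj)
    -- the chords avoid all segment edges
    have hchordS : ∀ i j, s(a i, b i) ∉ (S j).edges := by
      intro i j h
      rw [hSdef] at h
      rw [Walk.edges_append] at h
      rcases List.mem_append.mp h with hA | hpj
      · by_cases hij : i = j
        · subst hij
          exact hnotedge i (by rw [Walk.edges_append]; exact List.mem_append.mpr (Or.inl hA))
        · exact hcycdisj i j hij (a i) (hCa i)
            ((Walk.mem_support_append_iff _ _).mpr
              (Or.inl ((A j).fst_mem_support_of_mem_edges hA)))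
      · have hap : a i ∈ (p j).support := (p j).fst_mem_support_of_mem_edges hpj
        rcases hpc j i (a i) hap (hCa i) with ⟨hij, hz⟩ | ⟨hij, hz⟩
        · rw [← hij] at hz; exact hau i hz
        · rw [← hij] at hz; exact haw i hz
    -- basic length facts for segments
    have hSlen : ∀ i, (S i).length ≤ 2 * M := by
      intro i
      rw [hSdef]
      simp only [Walk.length_append]
      have h1 : (A i).length ≤ M := by
        have := hclen i
        rw [Walk.length_append] at this
        omega
      have := hplen i
      omega
    have hSlen1 : ∀ i, 1 ≤ (S i).length := by
      intro i
      rw [hSdef]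
      simp only [Walk.length_append]
      have : (A i).length ≠ 0 := fun h => huw i (Walk.eq_of_length_eq_zero h).symm
      omega
    have hStailnd : ∀ i, (S i).support.tail.Nodup := by
      intro i
      have := (hSpath i).support_nodup
      rw [(S i).support_eq_cons] at this
      exact (List.nodup_cons.mp this).2
    -- the key induction
    set Q := stmt15Walk S with hQdef
    have key : ∀ n, n ≤ k → ∀ i, (Q n i).IsTrail ∧
        (∀ z ∈ (Q n i).support.tail, ∃ m, m < n ∧ z ∈ (S (i + (m : Fin k))).support.tail) ∧
        (Q n i).support.tail.Nodup ∧
        (∀ e ∈ (Q n i).edges, ∃ m, m < n ∧ e ∈ (S (i + (m : Fin k))).edges) ∧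
        (Q n i).length ≤ n * (2 * M) ∧ n ≤ (Q n i).length ∧
        (∀ m, m < n → ∀ z ∈ (S (i + (m : Fin k))).support, z ∈ (Q n i).support) := by
      intro n
      induction n with
      | zero =>
        intro _ i
        refine ⟨?_, ?_, ?_, ?_, ?_, ?_, ?_⟩ <;>
          simp [hQdef, stmt15Walk, Walk.isTrail_def]
      | succ n ih =>
        intro hn i
        obtain ⟨iht, ihs, ihn, ihe, ihl, ihl1, ihsub⟩ :=
          ih (le_trans (Nat.le_succ n) hn) (i + 1)
        have hidx : ∀ m : ℕ, i + 1 + (m : Fin k) = i + ((m + 1 : ℕ) : Fin k) := by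
          intro m; push_cast; ring
        have hidx0 : i + ((0 : ℕ) : Fin k) = i := by push_cast; ring
        have hQ : Q (n + 1) i = (S i).append ((Q n (i + 1)).copy rfl
            (by congr 1; push_cast; ring)) := rfl
        have hnei : ∀ m : ℕ, m < n → i ≠ i + 1 + (m : Fin k) := by
          intro m hm h
          rw [hidx m] at h
          have : ((m + 1 : ℕ) : Fin k) = 0 := by
            have := h.symm
            rwa [add_eq_left] at this
          rw [Fin.natCast_eq_zero] at this
          have := Nat.le_of_dvd (Nat.succ_pos m) this
          omega
        have htail : (Q (n + 1) i).support.tail =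
            (S i).support.tail ++ (Q n (i + 1)).support.tail := by
          rw [hQ, Walk.tail_support_append, Walk.support_copy]
        have hedges : (Q (n + 1) i).edges = (S i).edges ++ (Q n (i + 1)).edges := by
          rw [hQ, Walk.edges_append, Walk.edges_copy]
        refine ⟨?_, ?_, ?_, ?_, ?_, ?_, ?_⟩
        · -- trail
          rw [Walk.isTrail_def, hedges]
          refine List.nodup_append.mpr ⟨(hSpath i).isTrail.edges_nodup,
            iht.edges_nodup, ?_⟩
          rintro e he1 _ he2 rfl
          obtain ⟨m, hm, hem⟩ := ihe e he2
          exact hEdisj i (i + 1 + (m : Fin k)) (hnei m hm) e he1 hem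
        · -- support tail membership
          intro z hz
          rw [htail] at hz
          rcases List.mem_append.mp hz with h | h
          · exact ⟨0, Nat.succ_pos n, by rwa [hidx0]⟩
          · obtain ⟨m, hm, hzm⟩ := ihs z h
            exact ⟨m + 1, by omega, by rwa [← hidx m]⟩
        · -- support tail nodup
          rw [htail]
          refine List.nodup_append.mpr ⟨hStailnd i, ihn, ?_⟩
          rintro z hz1 _ hz2 rfl
          obtain ⟨m, hm, hzm⟩ := ihs z hz2
          exact hTdisj i (i + 1 + (m : Fin k)) (hnei m hm) z hz1 hzm
        · -- edges membership
          intro e he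
          rw [hedges] at he
          rcases List.mem_append.mp he with h | h
          · exact ⟨0, Nat.succ_pos n, by rwa [hidx0]⟩
          · obtain ⟨m, hm, hem⟩ := ihe e h
            exact ⟨m + 1, by omega, by rwa [← hidx m]⟩
        · -- length upper bound
          rw [hQ, Walk.length_append, Walk.length_copy]
          have := hSlen i
          calc (S i).length + (Q n (i + 1)).length ≤ 2 * M + n * (2 * M) := by omega
            _ = (n + 1) * (2 * M) := by ring
        · -- length lower bound
          rw [hQ, Walk.length_append, Walk.length_copy]
          have := hSlen1 i
          omega
        · -- segment supports included
          intro m hm z hz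
          rw [hQ]
          rw [Walk.mem_support_append_iff]
          rcases Nat.eq_zero_or_pos m with rfl | hmpos
          · rw [hidx0] at hz
            exact Or.inl hz
          · obtain ⟨m', rfl⟩ := Nat.exists_eq_succ_of_ne_zero hmpos.ne'
            right
            rw [Walk.support_copy]
            exact ihsub m' (by omega) z (by rwa [hidx m'])
    obtain ⟨htrail, hstail, hsnodup, hedgesmem, hlen, hlen1, hsupsub⟩ := key k le_rfl 0
    have hw0 : w (0 + ((k : ℕ) : Fin k)) = w 0 := by
      rw [Fin.natCast_self, add_zero]
    refine ⟨w 0, (Q k 0).copy rfl hw0, ?_, ?_, ?_⟩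
    · -- cycle
      refine ⟨⟨?_, ?_⟩, ?_⟩
      · rw [Walk.isTrail_def, Walk.edges_copy]
        exact htrail.edges_nodup
      · intro h
        have := congrArg Walk.length h
        rw [Walk.length_copy] at this
        simp only [Walk.length_nil] at this
        have : 1 ≤ k := Nat.one_le_iff_ne_zero.mpr (NeZero.ne k)
        omega
      · rw [Walk.support_copy]
        exact hsnodup
    · -- length bound
      rw [Walk.length_copy]
      calc (Q k 0).length ≤ k * (2 * M) := hlen
        _ = 2 * k * M := by ring
    · -- chord count
      refine stmt15_count a b _ hinj hchord ?_ ?_ ?_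
      · intro i
        rw [Walk.support_copy]
        have : a i ∈ (S (0 + ((i.val : ℕ) : Fin k))).support := by
          rw [zero_add, Fin.cast_val_eq_self]
          rw [hSdef]
          exact (Walk.mem_support_append_iff _ _).mpr (Or.inl (haA i))
        exact hsupsub i.val i.isLt (a i) this
      · intro i
        rw [Walk.support_copy]
        have : b i ∈ (S (0 + ((i.val : ℕ) : Fin k))).support := by
          rw [zero_add, Fin.cast_val_eq_self]
          rw [hSdef]
          exact (Walk.mem_support_append_iff _ _).mpr (Or.inl (hbA i))
        exact hsupsub i.val i.isLt (b i) this
      · intro i h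
        rw [Walk.edges_copy] at h
        obtain ⟨m, -, hm⟩ := hedgesmem _ h
        exact hchordS i _ hm
end

section
/- Posa rotation endpoint structure: let P be a longest path in a graph G with endpoint x, let A be the set of endpoints of paths obtainable from P by a sequence of Pósa rotations fixing the other endpoint, and let N(A) be the neighborhood of A along P. Then every neighbor in G of a vertex of A lies in A ∪ N⁺(A) ∪ N⁻(A), where N⁺(A), N⁻(A) are the successors and predecessors along P of vertices of A; consequently |N_G(A)| ≤ 2|A|. -/
/-- One Pósa rotation applied to a path recorded as its list of vertices
`v :: M ++ c :: S` (keeping the last endpoint fixed): if the first endpoint `v` is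
adjacent to `c`, the new path is `(v :: M).reverse ++ c :: S`. -/
def PosaStep {V : Type*} (G : SimpleGraph V) (l l' : List V) : Prop :=
  ∃ (v : V) (M : List V) (c : V) (S : List V),
    l = v :: (M ++ c :: S) ∧ G.Adj v c ∧ l' = (v :: M).reverse ++ c :: S

/-- The set of endpoints obtainable from the path `p` by sequences of Pósa
rotations fixing the terminal endpoint. -/
def posaEndpoints {V : Type*} (G : SimpleGraph V) {x y : V} (p : G.Walk x y) :
    Set V :=
  {a | ∃ l : List V, Relation.ReflTransGen (PosaStep G) p.support l ∧
        l.head? = some a}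

/-- `u` is immediately followed by `w` in the list `l`. -/
def NextIn {V : Type*} (l : List V) (u w : V) : Prop :=
  ∃ i : ℕ, l[i]? = some u ∧ l[i + 1]? = some w

namespace PosaAux

variable {V : Type*} {G : SimpleGraph V}

/-- The list of consecutive pairs of a list. -/
def pairs : List V → List (V × V)
  | a :: b :: t => (a, b) :: pairs (b :: t)
  | _ => []

@[simp] lemma pairs_nil : pairs ([] : List V) = [] := rfl
@[simp] lemma pairs_single (a : V) : pairs [a] = [] := rfl
@[simp] lemma pairs_cons_cons (a b : V) (t : List V) :
    pairs (a :: b :: t) = (a, b) :: pairs (b :: t) := rfl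

lemma nextIn_nil {u w : V} : ¬ NextIn ([] : List V) u w := by
  rintro ⟨i, h, -⟩; simp at h

lemma nextIn_cons {a : V} {l : List V} {u w : V} :
    NextIn (a :: l) u w ↔ (a = u ∧ l.head? = some w) ∨ NextIn l u w := by
  constructor
  · rintro ⟨i, h1, h2⟩
    cases i with
    | zero =>
        left
        simp only [List.getElem?_cons_zero, Option.some.injEq] at h1
        simp only [List.getElem?_cons_succ] at h2
        exact ⟨h1, by cases l with
          | nil => simp at h2
          | cons b t => simpa using h2⟩
    | succ i =>
        right
        exact ⟨i, by simpa using h1, by simpa using h2⟩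
  · rintro (⟨rfl, h⟩ | ⟨i, h1, h2⟩)
    · refine ⟨0, by simp, ?_⟩
      cases l with
      | nil => simp at h
      | cons b t => simpa using h
    · exact ⟨i + 1, by simpa using h1, by simpa using h2⟩

lemma mem_pairs : ∀ (l : List V) (u w : V), (u, w) ∈ pairs l ↔ NextIn l u w
  | [], u, w => by simpa using (nextIn_nil (u := u) (w := w))
  | [a], u, w => by
      simp only [pairs_single, List.not_mem_nil, false_iff]
      rw [nextIn_cons]
      rintro (⟨-, h⟩ | h)
      · simp at h
      · exact nextIn_nil h
  | a :: b :: t, u, w => by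
      rw [pairs_cons_cons, List.mem_cons, nextIn_cons (a := a) (l := b :: t),
        mem_pairs (b :: t)]
      simp only [List.head?_cons, Option.some.injEq, Prod.mk.injEq]
      tauto

lemma pairs_append : ∀ (X : List V) (Y : List V) (u w : V),
    (u, w) ∈ pairs (X ++ Y) ↔
      (u, w) ∈ pairs X ∨ (X.getLast? = some u ∧ Y.head? = some w) ∨ (u, w) ∈ pairs Y
  | [], Y, u, w => by simp
  | [a], Y, u, w => by
      cases Y with
      | nil => simp
      | cons b t => simp [eq_comm]
  | a :: b :: X', Y, u, w => by
      have := pairs_append (b :: X') Y u w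
      simp only [List.cons_append, pairs_cons_cons, List.mem_cons] at this ⊢
      rw [this, List.getLast?_cons_cons]
      tauto

lemma pairs_reverse : ∀ (X : List V) (u w : V),
    (u, w) ∈ pairs X.reverse ↔ (w, u) ∈ pairs X
  | [], u, w => by simp
  | a :: X', u, w => by
      rw [List.reverse_cons, pairs_append, pairs_reverse X']
      cases X' with
      | nil => simp
      | cons b t =>
          simp only [pairs_cons_cons, List.mem_cons, List.getLast?_reverse,
            List.head?_cons, pairs_single, List.not_mem_nil, or_false,
            Option.some.injEq, Prod.mk.injEq]
          tauto

lemma nextIn_fst_unique {l : List V} (hl : l.Nodup) {z α β : V}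
    (h1 : NextIn l z α) (h2 : NextIn l z β) : α = β := by
  obtain ⟨i, hi, hi'⟩ := h1
  obtain ⟨j, hj, hj'⟩ := h2
  have hlt : i < l.length := (List.getElem?_eq_some_iff.mp hi).1
  have hij : i = j := List.getElem?_inj hlt hl |>.mp (hi.trans hj.symm)
  subst hij
  rw [hi'] at hj'
  exact Option.some_injective _ hj'

lemma nextIn_snd_unique {l : List V} (hl : l.Nodup) {z α β : V}
    (h1 : NextIn l α z) (h2 : NextIn l β z) : α = β := by
  obtain ⟨i, hi, hi'⟩ := h1
  obtain ⟨j, hj, hj'⟩ := h2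
  have hlt : i + 1 < l.length := (List.getElem?_eq_some_iff.mp hi').1
  have hij : i + 1 = j + 1 := List.getElem?_inj hlt hl |>.mp (hi'.trans hj'.symm)
  have : i = j := by omega
  subst this
  rw [hi] at hj
  exact Option.some_injective _ hj

lemma not_nextIn_of_getLast? {l : List V} (hl : l.Nodup) {z α : V}
    (hz : l.getLast? = some z) (h : NextIn l z α) : False := by
  obtain ⟨i, hi, hi'⟩ := h
  have hi1 : i + 1 < l.length := (List.getElem?_eq_some_iff.mp hi').1
  have hlast : l[l.length - 1]? = some z := by
    rw [← List.getLast?_eq_getElem?]; exact hz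
  have hlt : i < l.length := (List.getElem?_eq_some_iff.mp hi).1
  have : i = l.length - 1 := List.getElem?_inj hlt hl |>.mp (hi.trans hlast.symm)
  omega

/-- Build a walk from a list whose consecutive elements are adjacent. -/
def walkOfChain : ∀ (l : List V), l.Chain' G.Adj → (h : l ≠ []) →
    G.Walk (l.head h) (l.getLast h)
  | [a], _, _ => SimpleGraph.Walk.nil
  | a :: b :: t, hc, _ =>
      SimpleGraph.Walk.cons (List.isChain_cons_cons.mp hc).1
        (walkOfChain (b :: t) (List.isChain_cons_cons.mp hc).2 (by simp))

lemma support_walkOfChain : ∀ (l : List V) (hc : l.Chain' G.Adj) (h : l ≠ []),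
    (walkOfChain l hc h).support = l
  | [a], _, _ => rfl
  | a :: b :: t, hc, h => by
      show a :: (walkOfChain (b :: t) _ _).support = _
      rw [support_walkOfChain (b :: t) (List.isChain_cons_cons.mp hc).2 (by simp)]

lemma step_perm {l l' : List V} (h : PosaStep G l l') : l.Perm l' := by
  obtain ⟨v, M, c, S, rfl, -, rfl⟩ := h
  exact ((v :: M).reverse_perm.symm.append_right (c :: S))

lemma step_getLast? {l l' : List V} (h : PosaStep G l l') :
    l.getLast? = l'.getLast? := by
  obtain ⟨v, M, c, S, rfl, -, rfl⟩ := h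
  have h1 : (v :: (M ++ c :: S)).getLast? = (c :: S).getLast? := by
    rw [show v :: (M ++ c :: S) = (v :: M) ++ (c :: S) from rfl,
      List.getLast?_append_of_ne_nil _ (by simp)]
  have h2 : ((v :: M).reverse ++ c :: S).getLast? = (c :: S).getLast? :=
    List.getLast?_append_of_ne_nil _ (by simp)
  rw [h1, h2]

lemma step_chain' {l l' : List V} (h : PosaStep G l l')
    (hc : l.Chain' G.Adj) : l'.Chain' G.Adj := by
  obtain ⟨v, M, c, S, rfl, hadj, rfl⟩ := h
  rw [show v :: (M ++ c :: S) = (v :: M) ++ (c :: S) from rfl,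
    List.Chain', List.isChain_append] at hc
  rw [List.Chain', List.isChain_append]
  refine ⟨?_, hc.2.1, ?_⟩
  · rw [List.isChain_reverse]
    exact hc.1.imp fun a b hab => hab.symm
  · intro a ha b hb
    rw [List.getLast?_reverse, List.head?_cons] at ha
    rw [List.head?_cons] at hb
    obtain rfl : v = a := by simpa using ha
    obtain rfl : c = b := by simpa using hb
    exact hadj

lemma step_edge {l l' : List V} (h : PosaStep G l l') {z u : V}
    (he : (z, u) ∈ pairs l ∨ (u, z) ∈ pairs l) :
    ((z, u) ∈ pairs l' ∨ (u, z) ∈ pairs l') ∨ l'.head? = some z ∨ l'.head? = some u := by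
  obtain ⟨v, M, c, S, rfl, hadj, rfl⟩ := h
  have hhead : ((v :: M).reverse ++ c :: S).head? = (v :: M).getLast? := by
    rw [List.head?_append_of_ne_nil _ (by simp), List.head?_reverse]
  have key : ∀ α β : V, (α, β) ∈ pairs ((v :: M) ++ (c :: S)) →
      ((α, β) ∈ pairs ((v :: M).reverse ++ c :: S) ∨
        (β, α) ∈ pairs ((v :: M).reverse ++ c :: S)) ∨
      (v :: M).getLast? = some α := by
    intro α β hmem
    rw [pairs_append] at hmem
    rcases hmem with hm | ⟨h1, h2⟩ | hm
    · left; right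
      rw [pairs_append]
      exact Or.inl ((pairs_reverse _ _ _).mpr hm)
    · exact Or.inr h1
    · left; left
      rw [pairs_append]
      exact Or.inr (Or.inr hm)
  rcases he with he | he
  · rcases key z u he with hm | h1
    · exact Or.inl hm
    · exact Or.inr (Or.inl (hhead.trans h1))
  · rcases key u z he with hm | h1
    · exact Or.inl hm.symm
    · exact Or.inr (Or.inr (hhead.trans h1))

end PosaAux

open PosaAux

/-- Pósa's lemma: if `p` is a longest path in `G` and `A` is the set of endpoints
obtainable by Pósa rotations fixing the other endpoint, then every neighbor of a
vertex of `A` lies in `A` or is a successor or predecessor along `p` of a vertex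
of `A`; consequently `|N(A)| ≤ 2|A|`. -/
theorem stmt16 {V : Type*} [Fintype V] (G : SimpleGraph V) {x y : V}
    (p : G.Walk x y) (hp : p.IsPath)
    (hlong : ∀ (u v : V) (q : G.Walk u v), q.IsPath → q.length ≤ p.length) :
    (∀ a ∈ posaEndpoints G p, ∀ z : V, G.Adj a z →
      z ∈ posaEndpoints G p ∨ ∃ b ∈ posaEndpoints G p,
        NextIn p.support b z ∨ NextIn p.support z b) ∧
    {z : V | z ∉ posaEndpoints G p ∧ ∃ a ∈ posaEndpoints G p, G.Adj a z}.ncard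
      ≤ 2 * (posaEndpoints G p).ncard := by
  classical
  have hxA : x ∈ posaEndpoints G p := by
    refine ⟨p.support, Relation.ReflTransGen.refl, ?_⟩
    cases p <;> rfl
  have hGood : ∀ l, Relation.ReflTransGen (PosaStep G) p.support l →
      l.Perm p.support ∧ List.Chain' G.Adj l ∧ l.getLast? = p.support.getLast? := by
    intro l hl
    induction hl with
    | refl => exact ⟨List.Perm.refl _, p.isChain_adj_support, rfl⟩
    | tail _ hstep ih =>
        exact ⟨(step_perm hstep).symm.trans ih.1, step_chain' hstep ih.2.1,
          (step_getLast? hstep).symm.trans ih.2.2⟩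
  have hmain : ∀ a ∈ posaEndpoints G p, ∀ z : V, G.Adj a z →
      z ∈ posaEndpoints G p ∨ ∃ b ∈ posaEndpoints G p,
        NextIn p.support b z ∨ NextIn p.support z b := by
    intro a ha z hadj
    by_cases hzA : z ∈ posaEndpoints G p
    · exact Or.inl hzA
    right
    obtain ⟨l, hreach, hhead⟩ := ha
    obtain ⟨hperm, hchain, hlast⟩ := hGood l hreach
    have hnodup : l.Nodup := hperm.nodup_iff.mpr hp.support_nodup
    obtain ⟨T, rfl⟩ : ∃ T, l = a :: T := by
      cases l with
      | nil => simp at hhead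
      | cons b T =>
          obtain rfl : b = a := by simpa using hhead
          exact ⟨T, rfl⟩
    have hzl : z ∈ a :: T := by
      by_contra hzl
      have hc2 : List.Chain' G.Adj (z :: a :: T) :=
        List.isChain_cons_cons.mpr ⟨hadj.symm, hchain⟩
      set q := walkOfChain (z :: a :: T) hc2 (by simp) with hq
      have hsupp : q.support = z :: a :: T := support_walkOfChain _ _ _
      have hqpath : q.IsPath := SimpleGraph.Walk.IsPath.mk'
        (by rw [hsupp]; exact List.nodup_cons.mpr ⟨hzl, hnodup⟩)
      have hlen : q.support.length = q.length + 1 := SimpleGraph.Walk.length_support q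
      have hlen2 : (a :: T).length = p.length + 1 := by
        rw [hperm.length_eq, SimpleGraph.Walk.length_support]
      have := hlong _ _ q hqpath
      rw [hsupp] at hlen
      simp only [List.length_cons] at hlen hlen2
      omega
    have hzT : z ∈ T := by
      rcases List.mem_cons.mp hzl with rfl | h
      · exact absurd rfl hadj.ne'
      · exact h
    obtain ⟨M, S, rfl⟩ := List.append_of_mem hzT
    have hstep : PosaStep G (a :: (M ++ z :: S)) ((a :: M).reverse ++ z :: S) :=
      ⟨a, M, z, S, rfl, hadj, rfl⟩
    have hreach' := hreach.tail hstep
    set w := (a :: M).getLast (by simp) with hw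
    have hhead' : ((a :: M).reverse ++ z :: S).head? = some w := by
      rw [List.head?_append_of_ne_nil _ (by simp), List.head?_reverse,
        List.getLast?_eq_getLast (l := a :: M) (by simp)]
    have hwA : w ∈ posaEndpoints G p := ⟨_, hreach', hhead'⟩
    have hwz : (w, z) ∈ pairs (a :: (M ++ z :: S)) := by
      rw [show a :: (M ++ z :: S) = (a :: M) ++ (z :: S) from rfl, pairs_append]
      exact Or.inr (Or.inl ⟨List.getLast?_eq_getLast (l := a :: M) (by simp), rfl⟩)
    have hzp : z ∈ p.support := hperm.subset hzl
    obtain ⟨i, hilt, hiz⟩ := List.mem_iff_getElem.mp hzp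
    have hz? : p.support[i]? = some z := List.getElem?_eq_some_iff.mpr ⟨hilt, hiz⟩
    have hzx : z ≠ x := fun h => hzA (h ▸ hxA)
    have hx? : p.support[0]? = some x := by rw [p.support_eq_cons]; simp
    have hi0 : i ≠ 0 := by
      rintro rfl
      rw [hx?] at hz?
      exact hzx (by simpa using hz?.symm)
    have hpersist : ∀ u' : V, u' ∉ posaEndpoints G p →
        ((z, u') ∈ pairs p.support ∨ (u', z) ∈ pairs p.support) →
        (z, u') ∈ pairs (a :: (M ++ z :: S)) ∨
          (u', z) ∈ pairs (a :: (M ++ z :: S)) := by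
      intro u' hu' he
      have key : ∀ l', Relation.ReflTransGen (PosaStep G) p.support l' →
          (z, u') ∈ pairs l' ∨ (u', z) ∈ pairs l' := by
        intro l' hl'
        induction hl' with
        | refl => exact he
        | tail hab hst ih =>
            rcases step_edge hst ih with h | h | h
            · exact h
            · exact absurd ⟨_, hab.tail hst, h⟩ hzA
            · exact absurd ⟨_, hab.tail hst, h⟩ hu'
      exact key _ hreach
    obtain ⟨j, rfl⟩ : ∃ j, i = j + 1 := ⟨i - 1, by omega⟩
    set um := p.support[j]'(by omega) with hum
    have hum? : p.support[j]? = some um :=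
      List.getElem?_eq_some_iff.mpr ⟨by omega, rfl⟩
    have humz : NextIn p.support um z := ⟨j, hum?, hz?⟩
    by_cases humA : um ∈ posaEndpoints G p
    · exact ⟨um, humA, Or.inl humz⟩
    by_cases hisucc : j + 1 + 1 < p.support.length
    · set up := p.support[j + 1 + 1] with hup
      have hup? : p.support[j + 1 + 1]? = some up :=
        List.getElem?_eq_some_iff.mpr ⟨hisucc, rfl⟩
      have hzup : NextIn p.support z up := ⟨j + 1, hz?, hup?⟩
      by_cases hupA : up ∈ posaEndpoints G p
      · exact ⟨up, hupA, Or.inr hzup⟩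
      exfalso
      have h1 := hpersist um humA (Or.inr ((mem_pairs _ _ _).mpr humz))
      have h2 := hpersist up hupA (Or.inl ((mem_pairs _ _ _).mpr hzup))
      have hne : um ≠ up := by
        rw [hum, hup]
        intro h
        have := (List.Nodup.getElem_inj_iff hp.support_nodup).mp h
        omega
      rcases h1 with h1 | h1
      · rcases h2 with h2 | h2
        · exact hne (nextIn_fst_unique hnodup ((mem_pairs _ _ _).mp h1)
            ((mem_pairs _ _ _).mp h2))
        · exact hupA ((nextIn_snd_unique hnodup ((mem_pairs _ _ _).mp hwz)
            ((mem_pairs _ _ _).mp h2)) ▸ hwA)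
      · exact humA ((nextIn_snd_unique hnodup ((mem_pairs _ _ _).mp hwz)
          ((mem_pairs _ _ _).mp h1)) ▸ hwA)
    · exfalso
      have hzlast : p.support.getLast? = some z := by
        rw [List.getLast?_eq_getElem?]
        have hlen : p.support.length - 1 = j + 1 := by omega
        rw [hlen]; exact hz?
      have h1 := hpersist um humA (Or.inr ((mem_pairs _ _ _).mpr humz))
      rcases h1 with h1 | h1
      · exact not_nextIn_of_getLast? hnodup (hlast.trans hzlast)
          ((mem_pairs _ _ _).mp h1)
      · exact humA ((nextIn_snd_unique hnodup ((mem_pairs _ _ _).mp hwz)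
          ((mem_pairs _ _ _).mp h1)) ▸ hwA)
  refine ⟨hmain, ?_⟩
  set A := posaEndpoints G p with hA
  set f : V → V := fun b => if h : ∃ z, NextIn p.support b z then h.choose else b
    with hf
  set g : V → V := fun b => if h : ∃ z, NextIn p.support z b then h.choose else b
    with hg
  have hfspec : ∀ b z, NextIn p.support b z → f b = z := by
    intro b z h
    have hex : ∃ z, NextIn p.support b z := ⟨z, h⟩
    rw [hf]
    simp only [dif_pos hex]
    exact nextIn_fst_unique hp.support_nodup hex.choose_spec h
  have hgspec : ∀ b z, NextIn p.support z b → g b = z := by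
    intro b z h
    have hex : ∃ z, NextIn p.support z b := ⟨z, h⟩
    rw [hg]
    simp only [dif_pos hex]
    exact nextIn_snd_unique hp.support_nodup hex.choose_spec h
  have hsub : {z : V | z ∉ A ∧ ∃ a ∈ A, G.Adj a z} ⊆ f '' A ∪ g '' A := by
    rintro z ⟨hzA, a, haA, hadj⟩
    rcases hmain a haA z hadj with h | ⟨b, hbA, h | h⟩
    · exact absurd h hzA
    · exact Or.inl ⟨b, hbA, hfspec b z h⟩
    · exact Or.inr ⟨b, hbA, hgspec b z h⟩
  calc {z : V | z ∉ A ∧ ∃ a ∈ A, G.Adj a z}.ncard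
      ≤ (f '' A ∪ g '' A).ncard := Set.ncard_le_ncard hsub (Set.toFinite _)
    _ ≤ (f '' A).ncard + (g '' A).ncard := Set.ncard_union_le _ _
    _ ≤ A.ncard + A.ncard :=
        add_le_add (Set.ncard_image_le (Set.toFinite _))
          (Set.ncard_image_le (Set.toFinite _))
    _ = 2 * A.ncard := (two_mul _).symm
end
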